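/- arXiv:2104.14495 — 6 statements merged into one kernel-verified Lean document; each statement's English description precedes it below -/
import Mathlib

section
/- Let X be a real normed space, E ⊆ X, and T : E → X a mapping satisfying ‖Tx − Ty‖ ≤ ‖x − y‖ − ψ(‖x − y‖) for all x, y ∈ E, where ψ : [0,∞) → [0,∞) is nondecreasing and positive on (0,∞). Let q ∈ E be a fixpoint of T, and let (x_n) be a sequence in E satisfying x_{n+1} = T x_n for all n, with x_0 ≠ q. Then for every ε > 0 and every n ≥ Φ(ε) := ⌈2·∫_{ε/2}^{‖x_0 − q‖} dt/ψ(t)⌉ + 1 we have ‖x_n − q‖ ≤ ε. -/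
/-- Picard iteration of a ψ-weakly contractive mapping converges to the
fixpoint q with rate Φ(ε) := ⌈2·∫_{ε/2}^{‖x₀ − q‖} dt/ψ(t)⌉ + 1. -/
theorem stmt_6 {X : Type*} [NormedAddCommGroup X] [NormedSpace ℝ X]
    (E : Set X) (T : X → X) (ψ : ℝ → ℝ)
    (hψmono : ∀ s t : ℝ, 0 ≤ s → s ≤ t → ψ s ≤ ψ t)
    (hψpos : ∀ t : ℝ, 0 < t → 0 < ψ t)
    (hcontr : ∀ x ∈ E, ∀ y ∈ E, ‖T x - T y‖ ≤ ‖x - y‖ - ψ ‖x - y‖)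
    (q : X) (hqE : q ∈ E) (hfix : T q = q)
    (x : ℕ → X) (hxE : ∀ n, x n ∈ E) (hiter : ∀ n, x (n + 1) = T (x n))
    (hx0 : x 0 ≠ q)
    (ε : ℝ) (hε : 0 < ε) (n : ℕ)
    (hn : ⌈2 * ∫ t in (ε / 2)..‖x 0 - q‖, 1 / ψ t⌉₊ + 1 ≤ n) :
    ‖x n - q‖ ≤ ε := by
  by_contra hcon
  push_neg at hcon
  set d : ℕ → ℝ := fun k => ‖x k - q‖ with hd
  have hhalf : (0:ℝ) < ε / 2 := by linarith
  have hψhalf : 0 < ψ (ε / 2) := hψpos _ hhalf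
  have hstep : ∀ k, d (k + 1) ≤ d k - ψ (d k) := by
    intro k
    have h := hcontr (x k) (hxE k) q hqE
    rw [hfix] at h
    simpa [hd, hiter k] using h
  have hmono : ∀ k, d (k + 1) ≤ d k := by
    intro k
    rcases eq_or_lt_of_le (norm_nonneg (x k - q)) with h0 | h0
    · have hxkq : x k = q := by
        have : ‖x k - q‖ = 0 := h0.symm
        simpa [sub_eq_zero] using this
      simp [hd, hiter k, hxkq, hfix]
    · have h1 := hstep k
      have h2 := (hψpos _ h0).le
      simp only [hd] at h1 h2 ⊢
      linarith
  have hanti : Antitone d := antitone_nat_of_succ_le hmono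
  have hdn : ε < d n := hcon
  have hmem : ∀ k, k ≤ n → d k ∈ Set.Icc (ε / 2) (d 0) := by
    intro k hk
    refine ⟨?_, hanti (Nat.zero_le k)⟩
    have : d n ≤ d k := hanti hk
    linarith
  have hψposOn : ∀ t : ℝ, ε / 2 ≤ t → 0 < ψ t := fun t ht =>
    hψhalf.trans_le (hψmono _ _ hhalf.le ht)
  have hAnti : AntitoneOn (fun t => 1 / ψ t) (Set.Icc (ε / 2) (d 0)) := by
    intro s hs t ht hst
    have hψs := hψposOn s hs.1
    have hle : ψ s ≤ ψ t := hψmono s t (by linarith [hs.1]) hst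
    exact one_div_le_one_div_of_le hψs hle
  have hInt : ∀ a b, a ∈ Set.Icc (ε / 2) (d 0) → b ∈ Set.Icc (ε / 2) (d 0) →
      IntervalIntegrable (fun t => 1 / ψ t) MeasureTheory.volume a b := by
    intro a b ha hb
    exact (hAnti.mono (Set.uIcc_subset_Icc ha hb)).intervalIntegrable
  -- each step contributes at least 1 to the integral
  have hone : ∀ k, k < n → 1 ≤ ∫ t in d (k + 1)..d k, 1 / ψ t := by
    intro k hk
    have hmem1 := hmem (k + 1) hk
    have hmemk := hmem k (Nat.le_of_lt hk)
    have hab : d (k + 1) ≤ d k := hmono k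
    have hψb : 0 < ψ (d k) := hψposOn _ hmemk.1
    have hlow : ∀ t ∈ Set.Icc (d (k + 1)) (d k), 1 / ψ (d k) ≤ 1 / ψ t := by
      intro t ht
      exact hAnti ⟨le_trans hmem1.1 ht.1, le_trans ht.2 hmemk.2⟩ hmemk ht.2
    have hψstep : ψ (d k) ≤ d k - d (k + 1) := by linarith [hstep k]
    calc (1:ℝ) ≤ (d k - d (k + 1)) * (1 / ψ (d k)) := by
          rw [mul_one_div, le_div_iff₀ hψb, one_mul]
          exact hψstep
      _ = ∫ _ in d (k + 1)..d k, 1 / ψ (d k) := by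
          rw [intervalIntegral.integral_const, smul_eq_mul]
      _ ≤ ∫ t in d (k + 1)..d k, 1 / ψ t :=
          intervalIntegral.integral_mono_on hab intervalIntegrable_const
            (hInt _ _ hmem1 hmemk) hlow
  -- accumulate
  have hsum : ∀ m, m ≤ n → (m : ℝ) ≤ ∫ t in d m..d 0, 1 / ψ t := by
    intro m
    induction m with
    | zero => intro _; simp
    | succ m ih =>
      intro hm
      have hm' : m ≤ n := Nat.le_of_succ_le hm
      have hsplit : (∫ t in d (m + 1)..d m, 1 / ψ t) + ∫ t in d m..d 0, 1 / ψ t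
          = ∫ t in d (m + 1)..d 0, 1 / ψ t :=
        intervalIntegral.integral_add_adjacent_intervals
          (hInt _ _ (hmem _ hm) (hmem _ hm')) (hInt _ _ (hmem _ hm') (hmem 0 (Nat.zero_le n)))
      have h1 := hone m hm
      have h2 := ih hm'
      push_cast
      rw [← hsplit]
      linarith
  have hIn : (n : ℝ) ≤ ∫ t in d n..d 0, 1 / ψ t := hsum n le_rfl
  have hmemn := hmem n le_rfl
  have hsplit2 : (∫ t in (ε / 2)..d n, 1 / ψ t) + ∫ t in d n..d 0, 1 / ψ t
      = ∫ t in (ε / 2)..d 0, 1 / ψ t :=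
    intervalIntegral.integral_add_adjacent_intervals
      (hInt _ _ ⟨le_refl _, by linarith [hmemn.2]⟩ hmemn) (hInt _ _ hmemn (hmem 0 (Nat.zero_le n)))
  have hnn : 0 ≤ ∫ t in (ε / 2)..d n, 1 / ψ t := by
    apply intervalIntegral.integral_nonneg hmemn.1
    intro t ht
    exact (one_div_pos.mpr (hψposOn t ht.1)).le
  have hI : (n : ℝ) ≤ ∫ t in (ε / 2)..d 0, 1 / ψ t := by
    rw [← hsplit2]; linarith
  have hInonneg : 0 ≤ ∫ t in (ε / 2)..d 0, 1 / ψ t := le_trans (Nat.cast_nonneg n) hI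
  have h2I : (n : ℝ) ≤ 2 * ∫ t in (ε / 2)..d 0, 1 / ψ t := by linarith
  have hceil : (n : ℝ) ≤ (⌈2 * ∫ t in (ε / 2)..d 0, 1 / ψ t⌉₊ : ℝ) :=
    le_trans h2I (Nat.le_ceil _)
  have hfin : n ≤ ⌈2 * ∫ t in (ε / 2)..d 0, 1 / ψ t⌉₊ := by exact_mod_cast hceil
  simp only [hd] at hfin
  omega
end

section
/- Let X be a real normed space, E ⊆ X, (A_n) a sequence of mappings A_n : E → X, and A : E → X a mapping with ‖Ax − Ay‖ ≤ ‖x − y‖ − ψ(‖x − y‖) for all x, y ∈ E, where ψ : [0,∞) → [0,∞) is nondecreasing, positive on (0,∞), with ψ(0) = 0. Suppose ψ_n, g : [0,∞) → [0,∞) are functions positive on (0,∞), and (k_n), (μ_n), (h_n), (δ_n), (ν_n) are sequences of nonnegative reals such that for all x, y ∈ E and t ∈ [0,∞): ‖A_n x − A_n y‖ ≤ (1 + k_n)‖x − y‖ − ψ_n(‖x − y‖) + μ_n; ‖A_n x − Ax‖ ≤ h_n·g(‖x‖) + δ_n; and |ψ_n(t) − ψ(t)| ≤ ν_n; with μ_n,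 h_n, δ_n, ν_n → 0 with rates of convergence f₁, f₂, f₃, f₄ respectively. Let (x_n) be a sequence in E with x_{n+1} = A_n x_n for all n, let q ∈ E be a fixpoint of A, and suppose ∑_{n=0}^∞ k_n ≤ d for some d > 0. Let c, c₁ > 0 satisfy ‖x_n − q‖ ≤ c for all n and g(‖q‖) ≤ c₁. Then for every ε > 0 and every n ≥ Φ(ε) := σ((1/(2e^d))·min{ψ(ε/(2e^d)), ε}) + ⌈2e^d·∫_{ε/(2e^d)}^{c} dt/ψ(t)⌉ + 1, where σ(δ) := max{f₁(δ/4), f₂(δ/(4c₁)), f₃(δ/4), f₄(δ/4)}, we have ‖x_n − q‖ ≤ ε. -/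
/-!
Write `a n = ‖x n - q‖`. Once the perturbations are below `δ`, the triangle inequality through
`A_n q` turns the hypotheses into `a (n+1) ≤ (1 + k n) a n - ψ (a n) + δ`. Dividing by the partial
products `P n = ∏ (1 + k i) ≤ e^d` removes the factor `1 + k n`: the normalized sequence `b = a / P`
drops by at least `ψ (b n) / (2 e^d)` while it exceeds `η = ε / (2 e^d)`, and each such drop uses
up at least `1 / (2 e^d)` of `∫_η^c dt / ψ t`. So within `⌈2 e^d ∫_η^c dt / ψ t⌉ + 1` steps `b`
falls below `η`, after which it never exceeds `η + δ`, whence `a n ≤ e^d (η + δ) ≤ ε`.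
-/

open MeasureTheory Set Finset Real

theorem le_add_of_trapped {b : ℕ → ℝ} {η δ : ℝ} (hδ : 0 ≤ δ)
    (hle : ∀ j, b j ≤ η → b (j + 1) ≤ η + δ) (hgt : ∀ j, η < b j → b (j + 1) ≤ b j)
    {N : ℕ} (hN : b N ≤ η) : ∀ m, N ≤ m → b m ≤ η + δ := by
  intro m hm
  induction m, hm using Nat.le_induction with
  | base => linarith
  | succ m _ ih =>
    rcases le_or_gt (b m) η with h | h
    · exact hle m h
    · exact (hgt m h).trans ih

section Descent

variable {ψ : ℝ → ℝ}

theorem intervalIntegrable_one_div_of_monotoneOn (hψmono : MonotoneOn ψ (Ioi 0))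
    (hψpos : ∀ t, 0 < t → 0 < ψ t) {s t : ℝ} (hs : 0 < s) (ht : 0 < t) :
    IntervalIntegrable (fun u => 1 / ψ u) volume s t := by
  apply AntitoneOn.intervalIntegrable
  intro u hu v _ huv
  have hu0 : 0 < u := (lt_min hs ht).trans_le hu.1
  exact one_div_le_one_div_of_le (hψpos u hu0) (hψmono hu0 (hu0.trans_le huv) huv)

theorem sub_div_le_integral_one_div (hψmono : MonotoneOn ψ (Ioi 0))
    (hψpos : ∀ t, 0 < t → 0 < ψ t) {s t : ℝ} (hs : 0 < s) (hst : s ≤ t) :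
    (t - s) / ψ t ≤ ∫ u in s..t, 1 / ψ u := by
  have ht : 0 < t := hs.trans_le hst
  calc (t - s) / ψ t = ∫ _ in s..t, 1 / ψ t := by
        rw [intervalIntegral.integral_const, smul_eq_mul, mul_one_div]
    _ ≤ ∫ u in s..t, 1 / ψ u := by
        refine intervalIntegral.integral_mono_on hst intervalIntegrable_const
          (intervalIntegrable_one_div_of_monotoneOn hψmono hψpos hs ht) fun u hu => ?_
        have hu0 : 0 < u := hs.trans_le hu.1
        exact one_div_le_one_div_of_le (hψpos u hu0) (hψmono hu0 ht hu.2)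

theorem div_add_integral_le_of_descent (hψmono : MonotoneOn ψ (Ioi 0))
    (hψpos : ∀ t, 0 < t → 0 < ψ t) {b : ℕ → ℝ} {η K : ℝ} (hη : 0 < η) (hK : 0 < K) :
    ∀ m : ℕ, (∀ j ≤ m, η ≤ b j) → (∀ j < m, b (j + 1) ≤ b j - ψ (b j) / K) →
      m / K + ∫ u in η..b m, 1 / ψ u ≤ ∫ u in η..b 0, 1 / ψ u := by
  intro m
  induction m with
  | zero => intros; simp
  | succ m ih =>
    intro hb hstep
    have hbm : 0 < b m := hη.trans_le (hb m (by omega))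
    have hbm1 : 0 < b (m + 1) := hη.trans_le (hb (m + 1) le_rfl)
    have hdrop : b (m + 1) ≤ b m - ψ (b m) / K := hstep m (by omega)
    have hψbm := hψpos _ hbm
    have hdrop_pos : 0 < ψ (b m) / K := div_pos hψbm hK
    have hsplit := intervalIntegral.integral_add_adjacent_intervals
      (intervalIntegrable_one_div_of_monotoneOn hψmono hψpos hη hbm1)
      (intervalIntegrable_one_div_of_monotoneOn hψmono hψpos hbm1 hbm)
    have hlast : 1 / K ≤ (b m - b (m + 1)) / ψ (b m) := by
      rw [le_div_iff₀ hψbm]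
      linarith [show 1 / K * ψ (b m) = ψ (b m) / K by ring]
    have := sub_div_le_integral_one_div hψmono hψpos hbm1 (t := b m) (by linarith)
    have := ih (fun j hj => hb j (by omega)) (fun j hj => hstep j (by omega))
    push_cast
    linarith [show ((m : ℝ) + 1) / K = m / K + 1 / K by ring]

theorem exists_le_of_descent (hψmono : MonotoneOn ψ (Ioi 0)) (hψpos : ∀ t, 0 < t → 0 < ψ t)
    {b : ℕ → ℝ} {η K c : ℝ} (hη : 0 < η) (hK : 0 < K)
    (hstep : ∀ j, η < b j → b (j + 1) ≤ b j - ψ (b j) / K) (hb0 : b 0 ≤ c) :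
    ∃ j ≤ ⌈K * ∫ u in η..c, 1 / ψ u⌉₊ + 1, b j ≤ η := by
  by_contra! hall
  set M := ⌈K * ∫ u in η..c, 1 / ψ u⌉₊ + 1
  have hdescent := div_add_integral_le_of_descent hψmono hψpos hη hK M
    (fun j hj => (hall j hj).le) (fun j hj => hstep j (hall j hj.le))
  have hbM : η ≤ b M := (hall M le_rfl).le
  have hb0η : η ≤ b 0 := (hall 0 (Nat.zero_le _)).le
  have hnonneg : ∀ u, η ≤ u → 0 ≤ 1 / ψ u := fun u hu =>
    (one_div_pos.2 (hψpos u (hη.trans_le hu))).le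
  have htail : 0 ≤ ∫ u in η..b M, 1 / ψ u :=
    intervalIntegral.integral_nonneg hbM fun u hu => hnonneg u hu.1
  have hhead : ∫ u in η..b 0, 1 / ψ u ≤ ∫ u in η..c, 1 / ψ u :=
    intervalIntegral.integral_mono_interval le_rfl hb0η hb0
      ((ae_restrict_mem measurableSet_Ioc).mono fun u hu => hnonneg u hu.1.le)
      (intervalIntegrable_one_div_of_monotoneOn hψmono hψpos hη (hη.trans_le (hb0η.trans hb0)))
  have hM : K * ∫ u in η..c, 1 / ψ u < M := by
    have := Nat.le_ceil (K * ∫ u in η..c, 1 / ψ u)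
    push_cast [M]
    linarith
  have : (M : ℝ) / K ≤ ∫ u in η..c, 1 / ψ u := by linarith
  rw [div_le_iff₀ hK] at this
  linarith

theorem le_add_of_descent (hψmono : MonotoneOn ψ (Ioi 0))
    (hψpos : ∀ t, 0 < t → 0 < ψ t) {b : ℕ → ℝ} {η K δ c : ℝ} (hη : 0 < η) (hK : 0 < K)
    (hδ : 0 ≤ δ) (hdesc : ∀ j, η < b j → b (j + 1) ≤ b j - ψ (b j) / K)
    (htrap : ∀ j, b j ≤ η → b (j + 1) ≤ η + δ) (hb0 : b 0 ≤ c)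
    {n : ℕ} (hn : ⌈K * ∫ u in η..c, 1 / ψ u⌉₊ + 1 ≤ n) : b n ≤ η + δ := by
  obtain ⟨N, hNM, hN⟩ := exists_le_of_descent hψmono hψpos hη hK hdesc hb0
  refine le_add_of_trapped hδ htrap (fun j hj => (hdesc j hj).trans ?_) hN n (hNM.trans hn)
  exact sub_le_self _ (div_pos (hψpos _ (hη.trans hj)) hK).le

end Descent

theorem div_prod_succ_le_sub {k a : ℕ → ℝ} (hk : ∀ i, 0 ≤ k i) {e : ℝ} (j : ℕ)
    (h : a (j + 1) ≤ (1 + k j) * a j - e) :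
    a (j + 1) / ∏ i ∈ range (j + 1), (1 + k i)
      ≤ a j / ∏ i ∈ range j, (1 + k i) - e / ∏ i ∈ range (j + 1), (1 + k i) := by
  have hP : 0 < ∏ i ∈ range j, (1 + k i) := prod_pos fun i _ => by linarith [hk i]
  have hkj : 0 < 1 + k j := by linarith [hk j]
  rw [prod_range_succ]
  calc a (j + 1) / ((∏ i ∈ range j, (1 + k i)) * (1 + k j))
      ≤ ((1 + k j) * a j - e) / ((∏ i ∈ range j, (1 + k i)) * (1 + k j)) :=
        div_le_div_of_nonneg_right h (mul_pos hP hkj).le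
    _ = _ := by field_simp

theorem le_of_le_one_add_mul_sub {ψ : ℝ → ℝ} {k a : ℕ → ℝ} {D η δ c : ℝ}
    (hψmono : MonotoneOn ψ (Ici 0)) (hψ0 : ψ 0 = 0) (hψpos : ∀ t, 0 < t → 0 < ψ t)
    (hk : ∀ i, 0 ≤ k i) (hP : ∀ n, ∏ i ∈ range n, (1 + k i) ≤ D)
    (ha : ∀ n, 0 ≤ a n) (ha0 : a 0 ≤ c) (hη : 0 < η) (hδ : 0 ≤ δ) (hδψ : 2 * D * δ ≤ ψ η)
    (hrec : ∀ n, a (n + 1) ≤ (1 + k n) * a n - ψ (a n) + δ)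
    {n : ℕ} (hn : ⌈2 * D * ∫ u in η..c, 1 / ψ u⌉₊ + 1 ≤ n) :
    a n ≤ D * (η + δ) := by
  set P : ℕ → ℝ := fun j => ∏ i ∈ range j, (1 + k i)
  set b : ℕ → ℝ := fun j => a j / P j
  have hP1 : ∀ j, 1 ≤ P j := fun j => one_le_prod fun i _ => by linarith [hk i]
  have hD : 1 ≤ D := (hP1 0).trans (hP 0)
  have hba : ∀ j, b j ≤ a j := fun j => div_le_self (ha j) (hP1 j)
  have hstep : ∀ j, b (j + 1) ≤ b j - (ψ (a j) - δ) / P (j + 1) :=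
    fun j => div_prod_succ_le_sub hk j (by linarith [hrec j])
  have hdesc : ∀ j, η < b j → b (j + 1) ≤ b j - ψ (b j) / (2 * D) := by
    intro j hj
    have hψb : ψ (b j) ≤ ψ (a j) := hψmono (hη.trans hj).le (ha j) (hba j)
    have hδb : 2 * δ ≤ ψ (b j) := by
      have := hψmono hη.le (hη.trans hj).le hj.le
      nlinarith
    have hψa_sub : 0 ≤ ψ (a j) - δ := by linarith
    calc b (j + 1) ≤ b j - (ψ (a j) - δ) / P (j + 1) := hstep j
      _ ≤ b j - (ψ (a j) - δ) / D := by
          gcongr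
          · exact zero_lt_one.trans_le (hP1 _)
          · exact hP _
      _ ≤ b j - ψ (b j) / 2 / D := by gcongr; linarith
      _ = b j - ψ (b j) / (2 * D) := by rw [div_div]
  have htrap : ∀ j, b j ≤ η → b (j + 1) ≤ η + δ := by
    intro j hj
    have hψa : 0 ≤ ψ (a j) := hψ0 ▸ hψmono (mem_Ici.2 le_rfl) (ha j) (ha j)
    have hδP : δ / P (j + 1) ≤ δ := div_le_self hδ (hP1 _)
    have hψaP : 0 ≤ ψ (a j) / P (j + 1) := div_nonneg hψa (zero_le_one.trans (hP1 _))
    have := hstep j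
    rw [sub_div] at this
    linarith
  have hbn := le_add_of_descent (hψmono.mono Ioi_subset_Ici_self) hψpos hη (by positivity) hδ
    hdesc htrap (by simpa [b, P] using ha0) hn
  calc a n = P n * b n := by
        rw [mul_div_cancel₀ _ (zero_lt_one.trans_le (hP1 n)).ne']
    _ ≤ D * (η + δ) :=
        mul_le_mul (hP n) hbn (div_nonneg (ha n) (zero_le_one.trans (hP1 n))) (by linarith)

theorem prod_one_add_shift_le_exp {k : ℕ → ℝ} {d : ℝ} (hk : ∀ i, 0 ≤ k i)
    (hksum : ∀ n, ∑ i ∈ range (n + 1), k i ≤ d) (N n : ℕ) :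
    ∏ i ∈ range n, (1 + k (N + i)) ≤ exp d := by
  refine (prod_one_add_le_exp_sum _ fun i => hk _).trans (exp_le_exp.2 ?_)
  have hsplit := sum_range_add k N n
  have := sum_range_succ k (N + n)
  have := sum_nonneg fun i (_ : i ∈ range N) => hk i
  linarith [hksum (N + n), hk (N + n)]

theorem norm_map_sub_fixedPoint_le {X : Type*} [SeminormedAddCommGroup X] {E : Set X} {B A : X → X}
    {φ ψ : ℝ → ℝ} {κ μ θ ν : ℝ} {q y : X} (hy : y ∈ E) (hq : q ∈ E) (hfix : A q = q)
    (hB : ∀ y ∈ E, ∀ z ∈ E, ‖B y - B z‖ ≤ (1 + κ) * ‖y - z‖ - φ ‖y - z‖ + μ)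
    (hBA : ‖B q - A q‖ ≤ θ) (hφ : ∀ t, 0 ≤ t → |φ t - ψ t| ≤ ν) :
    ‖B y - q‖ ≤ (1 + κ) * ‖y - q‖ - ψ ‖y - q‖ + (μ + θ + ν) := by
  have htri := norm_sub_le_norm_sub_add_norm_sub (B y) (B q) (A q)
  rw [hfix] at htri hBA
  have := hB y hy q hq
  have := (abs_le.1 (hφ _ (norm_nonneg (y - q)))).1
  linarith

theorem add_le_of_le_rates {mu hs ds nu : ℕ → ℝ} {f₁ f₂ f₃ f₄ : ℝ → ℕ} {γ c₁ δ : ℝ}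
    (hhsnn : ∀ n, 0 ≤ hs n) (hc₁ : 0 < c₁) (hγ : γ ≤ c₁) (hδ : 0 < δ)
    (hf₁ : ∀ ε : ℝ, 0 < ε → ∀ n, f₁ ε ≤ n → mu n ≤ ε)
    (hf₂ : ∀ ε : ℝ, 0 < ε → ∀ n, f₂ ε ≤ n → hs n ≤ ε)
    (hf₃ : ∀ ε : ℝ, 0 < ε → ∀ n, f₃ ε ≤ n → ds n ≤ ε)
    (hf₄ : ∀ ε : ℝ, 0 < ε → ∀ n, f₄ ε ≤ n → nu n ≤ ε) {m : ℕ}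
    (hm : max (max (f₁ (δ / 4)) (f₂ (δ / (4 * c₁)))) (max (f₃ (δ / 4)) (f₄ (δ / 4))) ≤ m) :
    mu m + (hs m * γ + ds m) + nu m ≤ δ := by
  have hmu := hf₁ _ (by positivity) m (le_of_max_le_left (le_of_max_le_left hm))
  have hhs := hf₂ _ (by positivity) m (le_of_max_le_right (le_of_max_le_left hm))
  have hds := hf₃ _ (by positivity) m (le_of_max_le_left (le_of_max_le_right hm))
  have hnu := hf₄ _ (by positivity) m (le_of_max_le_right (le_of_max_le_right hm))
  have hhsγ : hs m * γ ≤ δ / 4 :=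
    calc hs m * γ ≤ δ / (4 * c₁) * c₁ :=
          (mul_le_mul_of_nonneg_left hγ (hhsnn m)).trans (by gcongr)
      _ = δ / 4 := by field_simp
  linarith

theorem stmt_9_general {X : Type*} [NormedAddCommGroup X]
    (E : Set X) (A : ℕ → X → X) (A0 : X → X) (ψ : ℝ → ℝ) (ψn : ℕ → ℝ → ℝ) (g : ℝ → ℝ)
    (k mu hs ds nu : ℕ → ℝ) (f₁ f₂ f₃ f₄ : ℝ → ℕ) (d c c₁ : ℝ) (q : X) (x : ℕ → X)
    (hψmono : ∀ s t : ℝ, 0 ≤ s → s ≤ t → ψ s ≤ ψ t)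
    (hψpos : ∀ t : ℝ, 0 < t → 0 < ψ t) (hψ0 : ψ 0 = 0)
    (hknn : ∀ n, 0 ≤ k n) (hhsnn : ∀ n, 0 ≤ hs n)
    (h1 : ∀ n, ∀ y ∈ E, ∀ z ∈ E,
      ‖A n y - A n z‖ ≤ (1 + k n) * ‖y - z‖ - ψn n ‖y - z‖ + mu n)
    (h2 : ∀ n, ∀ y ∈ E, ‖A n y - A0 y‖ ≤ hs n * g ‖y‖ + ds n)
    (h3 : ∀ n, ∀ t : ℝ, 0 ≤ t → |ψn n t - ψ t| ≤ nu n)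
    (hf₁ : ∀ ε : ℝ, 0 < ε → ∀ n, f₁ ε ≤ n → mu n ≤ ε)
    (hf₂ : ∀ ε : ℝ, 0 < ε → ∀ n, f₂ ε ≤ n → hs n ≤ ε)
    (hf₃ : ∀ ε : ℝ, 0 < ε → ∀ n, f₃ ε ≤ n → ds n ≤ ε)
    (hf₄ : ∀ ε : ℝ, 0 < ε → ∀ n, f₄ ε ≤ n → nu n ≤ ε)
    (hxE : ∀ n, x n ∈ E) (hiter : ∀ n, x (n + 1) = A n (x n))
    (hqE : q ∈ E) (hfix : A0 q = q)
    (hksum : ∀ n, ∑ i ∈ Finset.range (n + 1), k i ≤ d)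
    (hcb : ∀ n, ‖x n - q‖ ≤ c)
    (hc₁ : 0 < c₁) (hgq : g ‖q‖ ≤ c₁)
    (ε : ℝ) (hε : 0 < ε) (n : ℕ)
    (hn : max (max (f₁ ((1 / (2 * Real.exp d)) * min (ψ (ε / (2 * Real.exp d))) ε / 4))
              (f₂ ((1 / (2 * Real.exp d)) * min (ψ (ε / (2 * Real.exp d))) ε / (4 * c₁))))
          (max (f₃ ((1 / (2 * Real.exp d)) * min (ψ (ε / (2 * Real.exp d))) ε / 4))
              (f₄ ((1 / (2 * Real.exp d)) * min (ψ (ε / (2 * Real.exp d))) ε / 4)))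
        + ⌈2 * Real.exp d * ∫ t in (ε / (2 * Real.exp d))..c, 1 / ψ t⌉₊ + 1 ≤ n) :
    ‖x n - q‖ ≤ ε := by
  set D := exp d
  set η := ε / (2 * D) with hη_def
  set δ := 1 / (2 * D) * min (ψ η) ε with hδ_def
  set N₀ := max (max (f₁ (δ / 4)) (f₂ (δ / (4 * c₁)))) (max (f₃ (δ / 4)) (f₄ (δ / 4)))
  have hD0 : D ≠ 0 := (exp_pos d).ne'
  have hη : 0 < η := by positivity
  have hδ : 0 < δ := mul_pos (by positivity) (lt_min (hψpos η hη) hε)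
  have hDδ : 2 * D * δ = min (ψ η) ε := by rw [hδ_def]; field_simp
  have hrec : ∀ j, ‖x (N₀ + (j + 1)) - q‖
      ≤ (1 + k (N₀ + j)) * ‖x (N₀ + j) - q‖ - ψ ‖x (N₀ + j) - q‖ + δ := fun j => by
    have herr := add_le_of_le_rates hhsnn hc₁ hgq hδ hf₁ hf₂ hf₃ hf₄ (Nat.le_add_right N₀ j)
    rw [← add_assoc, hiter]
    exact (norm_map_sub_fixedPoint_le (hxE _) hqE hfix (h1 _) (h2 _ q hqE) (h3 _)).trans
      (by linarith)
  obtain ⟨j, rfl⟩ : ∃ j, n = N₀ + j := ⟨n - N₀, by omega⟩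
  calc ‖x (N₀ + j) - q‖ ≤ D * (η + δ) :=
        le_of_le_one_add_mul_sub (D := D) (a := fun j => ‖x (N₀ + j) - q‖)
          (fun s hs t _ hst => hψmono s t hs hst) hψ0 hψpos (fun i => hknn _)
          (prod_one_add_shift_le_exp hknn hksum N₀) (fun _ => norm_nonneg _) (hcb _) hη hδ.le
          (hDδ.trans_le (min_le_left _ _)) hrec (by omega)
    _ ≤ ε := by
        have : D * η = ε / 2 := by rw [hη_def]; field_simp
        linarith [min_le_right (ψ η) ε]

/-- Convergence with rate of the Picard scheme x_{n+1} = A_n x_n for a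
sequence (A_n) of approximate weakly contractive mappings approximating a ψ-weakly
contractive mapping A with fixpoint q (quantitative version of Alber–Guerre-Delabriere). -/
theorem stmt_9 {X : Type*} [NormedAddCommGroup X] [NormedSpace ℝ X]
    (E : Set X) (A : ℕ → X → X) (A0 : X → X) (ψ : ℝ → ℝ) (ψn : ℕ → ℝ → ℝ) (g : ℝ → ℝ)
    (k mu hs ds nu : ℕ → ℝ) (f₁ f₂ f₃ f₄ : ℝ → ℕ) (d c c₁ : ℝ) (q : X) (x : ℕ → X)
    (hψmono : ∀ s t : ℝ, 0 ≤ s → s ≤ t → ψ s ≤ ψ t)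
    (hψpos : ∀ t : ℝ, 0 < t → 0 < ψ t) (hψ0 : ψ 0 = 0)
    (hψnpos : ∀ n, ∀ t : ℝ, 0 < t → 0 < ψn n t)
    (hgpos : ∀ t : ℝ, 0 < t → 0 < g t)
    (hA0 : ∀ y ∈ E, ∀ z ∈ E, ‖A0 y - A0 z‖ ≤ ‖y - z‖ - ψ ‖y - z‖)
    (hknn : ∀ n, 0 ≤ k n) (hmunn : ∀ n, 0 ≤ mu n) (hhsnn : ∀ n, 0 ≤ hs n)
    (hdsnn : ∀ n, 0 ≤ ds n) (hnunn : ∀ n, 0 ≤ nu n)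
    (h1 : ∀ n, ∀ y ∈ E, ∀ z ∈ E,
      ‖A n y - A n z‖ ≤ (1 + k n) * ‖y - z‖ - ψn n ‖y - z‖ + mu n)
    (h2 : ∀ n, ∀ y ∈ E, ‖A n y - A0 y‖ ≤ hs n * g ‖y‖ + ds n)
    (h3 : ∀ n, ∀ t : ℝ, 0 ≤ t → |ψn n t - ψ t| ≤ nu n)
    (hf₁ : ∀ ε : ℝ, 0 < ε → ∀ n, f₁ ε ≤ n → mu n ≤ ε)
    (hf₂ : ∀ ε : ℝ, 0 < ε → ∀ n, f₂ ε ≤ n → hs n ≤ ε)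
    (hf₃ : ∀ ε : ℝ, 0 < ε → ∀ n, f₃ ε ≤ n → ds n ≤ ε)
    (hf₄ : ∀ ε : ℝ, 0 < ε → ∀ n, f₄ ε ≤ n → nu n ≤ ε)
    (hxE : ∀ n, x n ∈ E) (hiter : ∀ n, x (n + 1) = A n (x n))
    (hqE : q ∈ E) (hfix : A0 q = q)
    (hd : 0 < d) (hksum : ∀ n, ∑ i ∈ Finset.range (n + 1), k i ≤ d)
    (hc : 0 < c) (hcb : ∀ n, ‖x n - q‖ ≤ c)
    (hc₁ : 0 < c₁) (hgq : g ‖q‖ ≤ c₁)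
    (ε : ℝ) (hε : 0 < ε) (n : ℕ)
    (hn : max (max (f₁ ((1 / (2 * Real.exp d)) * min (ψ (ε / (2 * Real.exp d))) ε / 4))
              (f₂ ((1 / (2 * Real.exp d)) * min (ψ (ε / (2 * Real.exp d))) ε / (4 * c₁))))
          (max (f₃ ((1 / (2 * Real.exp d)) * min (ψ (ε / (2 * Real.exp d))) ε / 4))
              (f₄ ((1 / (2 * Real.exp d)) * min (ψ (ε / (2 * Real.exp d))) ε / 4)))
        + ⌈2 * Real.exp d * ∫ t in (ε / (2 * Real.exp d))..c, 1 / ψ t⌉₊ + 1 ≤ n) :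
    ‖x n - q‖ ≤ ε :=
  stmt_9_general E A A0 ψ ψn g k mu hs ds nu f₁ f₂ f₃ f₄ d c c₁ q x hψmono hψpos hψ0 hknn hhsnn h1
    h2 h3 hf₁ hf₂ hf₃ hf₄ hxE hiter hqE hfix hksum hcb hc₁ hgq ε hε n hn
end

section
/- Let X be a real Banach space equipped with a uniformly continuous duality selection map J with modulus of continuity ω. Let E ⊆ X, (A_n) a sequence of mappings A_n : E → X, ψ : [0,∞) → [0,∞) nondecreasing, positive on (0,∞), with ψ(0) = 0, and q ∈ X. Suppose σ : (0,∞) × (0,∞) → ℕ is such that for all δ, b > 0, all n ≥ σ(δ,b), and all x ∈ E with ‖x − q‖ ≤ b: |⟨A_n x − q, J(x − q)⟩| ≤ ‖x − q‖² − ψ(‖x − q‖) + δ. Let (x_n) be a sequence in E with x_{n+1} = (1 − α_n)x_n + α_n A_n x_n, where (α_n) is a sequence in (0, α] with α_n → 0 with rate of convergence f and ∑_{n=0}^∞ α_n = ∞ with rate of divergence r. Suppose c₁, c₂ > 0 satisfy ‖x_n − q‖ ≤ c₁, ‖x_n − q‖² ≤ c₁, and ‖A_n x_n − x_n‖ ≤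 c₂ for all n. Then for every ε > 0 and every n ≥ Φ(ε) := r(N((1/2)·min{2ψ(ε/√2), ε²/α}), 2∫_{ε²/2}^{c₁} dt/(2ψ(√t))) + 1, where N(δ) := max{σ(δ/4, c₁), f((1/c₂)·ω(c₁, δ/(4c₂)))}, we have ‖x_n − q‖ ≤ ε. -/
/-!
Put `s m = ‖x m - q‖²`. Pairing `x (m + 1) - q = (x m - q) + a m • (A m (x m) - x m)` with
`J (x (m + 1) - q)`, and using that `J` moves by at most `D / (4 c₂)` in one step (this is where the
rate `f` and the modulus `ω` enter), gives from the index `N` on the recurrence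
`s (m + 1) ≤ s m - 2 a m ψ(√(s m)) + a m D`, with `D ≤ ψ(ε/√2)` and `α D ≤ ε²/2`.
While `s m > ε²/2`, each step uses up at least `a m / 2` of the integral of `1 / (2ψ(√t))` between
`s (m + 1)` and `s m`. The sum of the `a m` over `[N, r N K]` exceeds `K`, twice the integral over
`[ε²/2, c₁]`, so some `s m` with `N ≤ m ≤ r N K + 1` is at most `ε²/2`; after that the recurrence
keeps `s` below `ε²`.
-/

open Finset Set MeasureTheory

theorem StrongDual.apply_le_of_norm_eq {X : Type*} [NormedAddCommGroup X] [NormedSpace ℝ X]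
    (φ : StrongDual ℝ X) {u : X} (hφ : ‖φ‖ = ‖u‖) (v : X) :
    φ v ≤ (‖u‖ ^ 2 + ‖v‖ ^ 2) / 2 :=
  calc φ v ≤ ‖φ‖ * ‖v‖ := (Real.le_norm_self _).trans (φ.le_opNorm v)
    _ = ‖u‖ * ‖v‖ := by rw [hφ]
    _ ≤ (‖u‖ ^ 2 + ‖v‖ ^ 2) / 2 := by nlinarith [sq_nonneg (‖u‖ - ‖v‖)]

theorem sq_norm_add_smul_le {X : Type*} [NormedAddCommGroup X] [NormedSpace ℝ X]
    {J : X → StrongDual ℝ X} (hJ : ∀ x : X, J x x = ‖x‖ ^ 2 ∧ ‖J x‖ = ‖x‖)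
    (u w : X) {t : ℝ} (ht : 0 ≤ t) :
    ‖u + t • w‖ ^ 2 ≤ ‖u‖ ^ 2 + 2 * t * (J u w + ‖J (u + t • w) - J u‖ * ‖w‖) := by
  set v := u + t • w
  have hv : ‖v‖ ^ 2 = J v u + t * J v w := by
    rw [← (hJ v).1, map_add, map_smul, smul_eq_mul]
  have hvu := (J v).apply_le_of_norm_eq (hJ v).2 u
  have hvw : J v w ≤ J u w + ‖J v - J u‖ * ‖w‖ := by
    have := (Real.le_norm_self _).trans ((J v - J u).le_opNorm w)
    rw [sub_apply] at this
    linarith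
  nlinarith [mul_le_mul_of_nonneg_left hvw ht]

theorem sq_norm_mann_succ_sub_le {X : Type*} [NormedAddCommGroup X] [NormedSpace ℝ X]
    {J : X → StrongDual ℝ X} {ω : ℝ → ℝ → ℝ}
    (hJ : ∀ x : X, J x x = ‖x‖ ^ 2 ∧ ‖J x‖ = ‖x‖)
    (hωpos : ∀ b ε : ℝ, 0 < b → 0 < ε → 0 < ω b ε)
    (hω : ∀ b ε : ℝ, 0 < b → 0 < ε → ∀ x y : X, ‖x‖ ≤ b → ‖y‖ ≤ b →
      ‖x - y‖ ≤ ω b ε → ‖J x - J y‖ ≤ ε)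
    {E : Set X} {A : ℕ → X → X} {ψ : ℝ → ℝ} {q : X} {σ : ℝ → ℝ → ℕ}
    {a : ℕ → ℝ} {f : ℝ → ℕ} {c₁ c₂ : ℝ} {x : ℕ → X}
    (hσ : ∀ δ b : ℝ, 0 < δ → 0 < b → ∀ n, σ δ b ≤ n → ∀ y ∈ E, ‖y - q‖ ≤ b →
      |J (y - q) (A n y - q)| ≤ ‖y - q‖ ^ 2 - ψ ‖y - q‖ + δ)
    (hxE : ∀ n, x n ∈ E)
    (hiter : ∀ n, x (n + 1) = (1 - a n) • x n + a n • A n (x n))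
    (ha : ∀ n, 0 < a n) (hf : ∀ ε : ℝ, 0 < ε → ∀ n, f ε ≤ n → a n ≤ ε)
    (hc₁ : 0 < c₁) (hc₁b : ∀ n, ‖x n - q‖ ≤ c₁)
    (hc₂ : 0 < c₂) (hc₂b : ∀ n, ‖A n (x n) - x n‖ ≤ c₂)
    {D : ℝ} (hD : 0 < D) {m : ℕ}
    (hm : max (σ (D / 4) c₁) (f ((1 / c₂) * ω c₁ (D / (4 * c₂)))) ≤ m) :
    ‖x (m + 1) - q‖ ^ 2 ≤ ‖x m - q‖ ^ 2 - 2 * a m * ψ ‖x m - q‖ + a m * D := by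
  set u := x m - q
  set w := A m (x m) - x m
  have hsucc : x (m + 1) - q = u + a m • w := by rw [hiter]; module
  have hωD := hωpos c₁ (D / (4 * c₂)) hc₁ (by positivity)
  have ham : a m ≤ (1 / c₂) * ω c₁ (D / (4 * c₂)) :=
    hf _ (by positivity) m (le_of_max_le_right hm)
  have hstep : ‖(u + a m • w) - u‖ ≤ ω c₁ (D / (4 * c₂)) := by
    rw [add_sub_cancel_left, norm_smul, Real.norm_of_nonneg (ha m).le]
    calc a m * ‖w‖ ≤ (1 / c₂) * ω c₁ (D / (4 * c₂)) * c₂ :=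
          mul_le_mul ham (hc₂b m) (norm_nonneg _) (by positivity)
      _ = ω c₁ (D / (4 * c₂)) := by field_simp
  have hJw : ‖J (u + a m • w) - J u‖ * ‖w‖ ≤ D / 4 :=
    calc ‖J (u + a m • w) - J u‖ * ‖w‖ ≤ D / (4 * c₂) * c₂ :=
          mul_le_mul (hω _ _ hc₁ (by positivity) _ _ (hsucc ▸ hc₁b (m + 1)) (hc₁b m) hstep)
            (hc₂b m) (norm_nonneg _) (by positivity)
      _ = D / 4 := by field_simp
  have hJu : J u w ≤ -ψ ‖u‖ + D / 4 := by
    have hσm := hσ (D / 4) c₁ (by positivity) hc₁ m (le_of_max_le_left hm) (x m) (hxE m) (hc₁b m)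
    have hsplit : J u w = J u (A m (x m) - q) - ‖u‖ ^ 2 := by
      rw [← (hJ u).1, ← map_sub, sub_sub_sub_cancel_right]
    linarith [le_abs_self (J u (A m (x m) - q))]
  rw [hsucc]
  nlinarith [sq_norm_add_smul_le hJ u w (ha m).le,
    mul_le_mul_of_nonneg_left (add_le_add hJu hJw) (ha m).le]

section Recurrence

variable {s a : ℕ → ℝ} {φ : ℝ → ℝ} {θ D : ℝ} {N : ℕ}

theorem antitoneOn_one_div_two_mul (hφ : MonotoneOn φ (Ici θ)) (hθ : 0 < φ θ) :
    AntitoneOn (fun t => 1 / (2 * φ t)) (Ici θ) := fun u hu v hv huv => by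
  have hφu : 0 < φ u := hθ.trans_le (hφ self_mem_Ici hu hu)
  exact one_div_le_one_div_of_le (by positivity) (by linarith [hφ hu hv huv])

theorem intervalIntegrable_one_div_two_mul (hφ : MonotoneOn φ (Ici θ)) (hθ : 0 < φ θ)
    {u v : ℝ} (hu : θ ≤ u) (hv : θ ≤ v) :
    IntervalIntegrable (fun t => 1 / (2 * φ t)) volume u v :=
  ((antitoneOn_one_div_two_mul hφ hθ).mono fun _ ht => (le_inf hu hv).trans ht.1).intervalIntegrable

theorem half_le_integral_one_div_two_mul (hφ : MonotoneOn φ (Ici θ)) (hθ : 0 < φ θ)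
    {u v c : ℝ} (hu : θ ≤ u) (huv : u ≤ v) (hc : c * φ v ≤ v - u) :
    c / 2 ≤ ∫ t in u..v, 1 / (2 * φ t) := by
  have hφv : 0 < φ v := hθ.trans_le (hφ self_mem_Ici (hu.trans huv) (hu.trans huv))
  calc c / 2 ≤ (v - u) * (1 / (2 * φ v)) := by
        rw [mul_one_div, le_div_iff₀ (by positivity)]; linarith
    _ = ∫ _ in u..v, 1 / (2 * φ v) := by rw [intervalIntegral.integral_const, smul_eq_mul]
    _ ≤ ∫ t in u..v, 1 / (2 * φ t) :=
      intervalIntegral.integral_mono_on huv intervalIntegrable_const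
        (intervalIntegrable_one_div_two_mul hφ hθ hu (hu.trans huv))
        fun t ht => antitoneOn_one_div_two_mul hφ hθ (hu.trans ht.1) (hu.trans huv) ht.2

theorem half_sum_le_integral_of_recurrence (hφ : MonotoneOn φ (Ici θ)) (hθ : 0 < φ θ)
    (hD : D ≤ φ θ) (ha : ∀ m, 0 ≤ a m)
    (hrec : ∀ m, N ≤ m → s (m + 1) ≤ s m - 2 * a m * φ (s m) + a m * D)
    {M : ℕ} (hNM : N ≤ M) (hgt : ∀ k, N ≤ k → k ≤ M → θ < s k) :
    (∑ i ∈ Ico N M, a i) / 2 ≤ ∫ t in s M..s N, 1 / (2 * φ t) := by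
  induction M, hNM using Nat.le_induction with
  | base => simp
  | succ k hk ih =>
    have hsk := hgt k hk (by omega)
    have hsk1 := hgt (k + 1) (by omega) le_rfl
    have hφk : φ θ ≤ φ (s k) := hφ self_mem_Ici hsk.le hsk.le
    have hdec : a k * φ (s k) ≤ s k - s (k + 1) := by
      nlinarith [hrec k hk, mul_le_mul_of_nonneg_left (hD.trans hφk) (ha k)]
    have hle : s (k + 1) ≤ s k := by nlinarith [mul_nonneg (ha k) (hθ.le.trans hφk)]
    rw [sum_Ico_succ_top hk, ← intervalIntegral.integral_add_adjacent_intervals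
      (intervalIntegrable_one_div_two_mul hφ hθ hsk1.le hsk.le)
      (intervalIntegrable_one_div_two_mul hφ hθ hsk.le (hgt N le_rfl (by omega)).le)]
    linarith [ih fun i hi hik => hgt i hi (by omega),
      half_le_integral_one_div_two_mul hφ hθ hsk1.le hle hdec]

theorem exists_le_of_integral_lt_sum (hφ : MonotoneOn φ (Ici θ)) (hθ : 0 < φ θ)
    (hD : D ≤ φ θ) (ha : ∀ m, 0 ≤ a m)
    (hrec : ∀ m, N ≤ m → s (m + 1) ≤ s m - 2 * a m * φ (s m) + a m * D)
    {c : ℝ} (hsc : ∀ m, s m ≤ c) {R : ℕ} (hNR : N ≤ R)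
    (hsum : 2 * ∫ t in θ..c, 1 / (2 * φ t) < ∑ i ∈ Icc N R, a i) :
    ∃ m, N ≤ m ∧ m ≤ R + 1 ∧ s m ≤ θ := by
  by_contra! hgt
  have hN := hgt N le_rfl (by omega)
  have hR := hgt (R + 1) (by omega) le_rfl
  have hpos : ∀ t, θ ≤ t → 0 ≤ 1 / (2 * φ t) := fun t ht =>
    (one_div_pos.2 (mul_pos two_pos (hθ.trans_le (hφ self_mem_Ici ht ht)))).le
  have hhalf := half_sum_le_integral_of_recurrence hφ hθ hD ha hrec (M := R + 1) (by omega) hgt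
  rw [Finset.Ico_add_one_right_eq_Icc, ← intervalIntegral.integral_interval_sub_left
    (intervalIntegrable_one_div_two_mul hφ hθ le_rfl hN.le)
    (intervalIntegrable_one_div_two_mul hφ hθ le_rfl hR.le)] at hhalf
  have hθN : ∫ t in θ..s N, 1 / (2 * φ t) ≤ ∫ t in θ..c, 1 / (2 * φ t) :=
    intervalIntegral.integral_mono_interval le_rfl hN.le (hsc N)
      ((ae_restrict_mem measurableSet_Ioc).mono fun t ht => hpos t ht.1.le)
      (intervalIntegrable_one_div_two_mul hφ hθ le_rfl (hN.le.trans (hsc N)))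
  have hθR : 0 ≤ ∫ t in θ..s (R + 1), 1 / (2 * φ t) :=
    intervalIntegral.integral_nonneg hR.le fun t ht => hpos t ht.1
  linarith

theorem le_two_mul_of_le_of_recurrence (hφ : MonotoneOn φ (Ici θ)) (hφ_nonneg : ∀ t, 0 ≤ φ t)
    (hθ : 0 ≤ θ) (hD : D ≤ φ θ) (ha : ∀ m, 0 ≤ a m) (haD : ∀ m, a m * D ≤ θ)
    (hrec : ∀ m, N ≤ m → s (m + 1) ≤ s m - 2 * a m * φ (s m) + a m * D)
    {m : ℕ} (hNm : N ≤ m) (hsm : s m ≤ θ) {k : ℕ} (hmk : m ≤ k) : s k ≤ 2 * θ := by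
  induction k, hmk using Nat.le_induction with
  | base => linarith
  | succ k hmk ih =>
    have hrec := hrec k (hNm.trans hmk)
    have haφ := mul_nonneg (ha k) (hφ_nonneg (s k))
    rcases le_or_gt (s k) θ with hsk | hsk
    · linarith [haD k]
    · have hDφ : D ≤ φ (s k) := hD.trans (hφ self_mem_Ici hsk.le hsk.le)
      nlinarith [mul_le_mul_of_nonneg_left hDφ (ha k)]

theorem le_two_mul_of_recurrence_of_rateOfDivergence (hφ : MonotoneOn φ (Ici θ))
    (hφ_nonneg : ∀ t, 0 ≤ φ t) (hθ : 0 ≤ θ) (hφθ : 0 < φ θ) (hD : D ≤ φ θ)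
    (ha : ∀ m, 0 ≤ a m) (haD : ∀ m, a m * D ≤ θ) {c : ℝ} (hsc : ∀ m, s m ≤ c)
    (hrec : ∀ m, N ≤ m → s (m + 1) ≤ s m - 2 * a m * φ (s m) + a m * D)
    {r : ℕ → ℝ → ℕ} (hr : ∀ (M : ℕ) (y : ℝ), 0 < y → M ≤ r M y ∧ y < ∑ n ∈ Icc M (r M y), a n)
    {n : ℕ} (hn : r N (2 * ∫ t in θ..c, 1 / (2 * φ t)) + 1 ≤ n) : s n ≤ 2 * θ := by
  rcases le_or_gt c θ with hcθ | hθc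
  · linarith [hsc n]
  have hK : 0 < 2 * ∫ t in θ..c, 1 / (2 * φ t) :=
    mul_pos two_pos <| intervalIntegral.intervalIntegral_pos_of_pos_on
      (intervalIntegrable_one_div_two_mul hφ hφθ le_rfl hθc.le)
      (fun t ht => one_div_pos.2 (mul_pos two_pos
        (hφθ.trans_le (hφ self_mem_Ici ht.1.le ht.1.le)))) hθc
  obtain ⟨hNR, hsum⟩ := hr N _ hK
  obtain ⟨m, hNm, hmR, hsm⟩ := exists_le_of_integral_lt_sum hφ hφθ hD ha hrec hsc hNR hsum
  exact le_two_mul_of_le_of_recurrence hφ hφ_nonneg hθ hD ha haD hrec hNm hsm (hmR.trans hn)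

end Recurrence

theorem stmt_12_general {X : Type*} [NormedAddCommGroup X] [NormedSpace ℝ X]
    (J : X → StrongDual ℝ X) (ω : ℝ → ℝ → ℝ)
    (hJ : ∀ x : X, J x x = ‖x‖ ^ 2 ∧ ‖J x‖ = ‖x‖)
    (hωpos : ∀ b ε : ℝ, 0 < b → 0 < ε → 0 < ω b ε)
    (hω : ∀ b ε : ℝ, 0 < b → 0 < ε → ∀ x y : X, ‖x‖ ≤ b → ‖y‖ ≤ b →
      ‖x - y‖ ≤ ω b ε → ‖J x - J y‖ ≤ ε)
    (E : Set X) (A : ℕ → X → X) (ψ : ℝ → ℝ) (q : X) (σ : ℝ → ℝ → ℕ)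
    (a : ℕ → ℝ) (α : ℝ) (f : ℝ → ℕ) (r : ℕ → ℝ → ℕ) (c₁ c₂ : ℝ) (x : ℕ → X)
    (hψmono : ∀ s t : ℝ, 0 ≤ s → s ≤ t → ψ s ≤ ψ t)
    (hψpos : ∀ t : ℝ, 0 < t → 0 < ψ t) (hψ0 : ψ 0 = 0)
    (hσ : ∀ δ b : ℝ, 0 < δ → 0 < b → ∀ n, σ δ b ≤ n → ∀ y ∈ E, ‖y - q‖ ≤ b →
      |J (y - q) (A n y - q)| ≤ ‖y - q‖ ^ 2 - ψ ‖y - q‖ + δ)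
    (hxE : ∀ n, x n ∈ E)
    (hiter : ∀ n, x (n + 1) = (1 - a n) • x n + a n • A n (x n))
    (ha : ∀ n, 0 < a n) (hale : ∀ n, a n ≤ α)
    (hf : ∀ ε : ℝ, 0 < ε → ∀ n, f ε ≤ n → a n ≤ ε)
    (hr : ∀ (M : ℕ) (y : ℝ), 0 < y →
      M ≤ r M y ∧ y < ∑ n ∈ Finset.Icc M (r M y), a n)
    (hc₁ : 0 < c₁) (hc₁b : ∀ n, ‖x n - q‖ ≤ c₁) (hc₁b' : ∀ n, ‖x n - q‖ ^ 2 ≤ c₁)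
    (hc₂ : 0 < c₂) (hc₂b : ∀ n, ‖A n (x n) - x n‖ ≤ c₂)
    (ε : ℝ) (hε : 0 < ε) (n : ℕ)
    (hn : r (max (σ ((1 / 2) * min (2 * ψ (ε / Real.sqrt 2)) (ε ^ 2 / α) / 4) c₁)
            (f ((1 / c₂) * ω c₁ ((1 / 2) * min (2 * ψ (ε / Real.sqrt 2)) (ε ^ 2 / α) / (4 * c₂)))))
        (2 * ∫ t in (ε ^ 2 / 2)..c₁, 1 / (2 * ψ (Real.sqrt t))) + 1 ≤ n) :
    ‖x n - q‖ ≤ ε := by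
  have hα : 0 < α := (ha 0).trans_le (hale 0)
  have hsqrt : Real.sqrt (ε ^ 2 / 2) = ε / Real.sqrt 2 := by
    rw [Real.sqrt_div' _ zero_le_two, Real.sqrt_sq hε.le]
  have hψε : 0 < ψ (ε / Real.sqrt 2) := hψpos _ (by positivity)
  set D := (1 / 2) * min (2 * ψ (ε / Real.sqrt 2)) (ε ^ 2 / α) with hD
  have hDpos : 0 < D := mul_pos one_half_pos (lt_min (by linarith) (by positivity))
  have hDψ : D ≤ ψ (ε / Real.sqrt 2) := by
    linarith [min_le_left (2 * ψ (ε / Real.sqrt 2)) (ε ^ 2 / α)]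
  have haD : ∀ m, a m * D ≤ ε ^ 2 / 2 := fun m =>
    calc a m * D ≤ α * ((1 / 2) * (ε ^ 2 / α)) :=
          mul_le_mul (hale m) (by linarith [min_le_right (2 * ψ (ε / Real.sqrt 2)) (ε ^ 2 / α)])
            hDpos.le hα.le
      _ = ε ^ 2 / 2 := by field_simp
  have hs : ‖x n - q‖ ^ 2 ≤ 2 * (ε ^ 2 / 2) :=
    le_two_mul_of_recurrence_of_rateOfDivergence (φ := fun t => ψ (Real.sqrt t))
      (fun s _ t _ hst => hψmono _ _ (Real.sqrt_nonneg s) (Real.sqrt_le_sqrt hst))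
      (fun t => hψ0 ▸ hψmono 0 _ le_rfl (Real.sqrt_nonneg t)) (by positivity)
      (by simpa only [hsqrt]) (by simpa only [hsqrt]) (fun m => (ha m).le) haD hc₁b'
      (fun m hm => by
        simpa only [Real.sqrt_sq (norm_nonneg _)] using sq_norm_mann_succ_sub_le hJ hωpos hω hσ
          hxE hiter ha hf hc₁ hc₁b hc₂ hc₂b hDpos hm) hr hn
  exact (pow_le_pow_iff_left₀ (norm_nonneg _) hε.le two_ne_zero).1 (by linarith)

/-- Convergence with rate of the Mann iteration for a sequence of mappings
which is quasi asymptotically d-weakly contractive w.r.t. q, in a Banach space with a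
uniformly continuous duality selection map J with modulus ω. -/
theorem stmt_12 {X : Type*} [NormedAddCommGroup X] [NormedSpace ℝ X] [CompleteSpace X]
    (J : X → StrongDual ℝ X) (ω : ℝ → ℝ → ℝ)
    (hJ : ∀ x : X, J x x = ‖x‖ ^ 2 ∧ ‖J x‖ = ‖x‖)
    (hωpos : ∀ b ε : ℝ, 0 < b → 0 < ε → 0 < ω b ε)
    (hω : ∀ b ε : ℝ, 0 < b → 0 < ε → ∀ x y : X, ‖x‖ ≤ b → ‖y‖ ≤ b →
      ‖x - y‖ ≤ ω b ε → ‖J x - J y‖ ≤ ε)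
    (E : Set X) (A : ℕ → X → X) (ψ : ℝ → ℝ) (q : X) (σ : ℝ → ℝ → ℕ)
    (a : ℕ → ℝ) (α : ℝ) (f : ℝ → ℕ) (r : ℕ → ℝ → ℕ) (c₁ c₂ : ℝ) (x : ℕ → X)
    (hψmono : ∀ s t : ℝ, 0 ≤ s → s ≤ t → ψ s ≤ ψ t)
    (hψpos : ∀ t : ℝ, 0 < t → 0 < ψ t) (hψ0 : ψ 0 = 0)
    (hσ : ∀ δ b : ℝ, 0 < δ → 0 < b → ∀ n, σ δ b ≤ n → ∀ y ∈ E, ‖y - q‖ ≤ b →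
      |J (y - q) (A n y - q)| ≤ ‖y - q‖ ^ 2 - ψ ‖y - q‖ + δ)
    (hxE : ∀ n, x n ∈ E)
    (hiter : ∀ n, x (n + 1) = (1 - a n) • x n + a n • A n (x n))
    (ha : ∀ n, 0 < a n) (hale : ∀ n, a n ≤ α)
    (hf : ∀ ε : ℝ, 0 < ε → ∀ n, f ε ≤ n → a n ≤ ε)
    (hr : ∀ (M : ℕ) (y : ℝ), 0 < y →
      M ≤ r M y ∧ y < ∑ n ∈ Finset.Icc M (r M y), a n)
    (hc₁ : 0 < c₁) (hc₁b : ∀ n, ‖x n - q‖ ≤ c₁) (hc₁b' : ∀ n, ‖x n - q‖ ^ 2 ≤ c₁)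
    (hc₂ : 0 < c₂) (hc₂b : ∀ n, ‖A n (x n) - x n‖ ≤ c₂)
    (ε : ℝ) (hε : 0 < ε) (n : ℕ)
    (hn : r (max (σ ((1 / 2) * min (2 * ψ (ε / Real.sqrt 2)) (ε ^ 2 / α) / 4) c₁)
            (f ((1 / c₂) * ω c₁ ((1 / 2) * min (2 * ψ (ε / Real.sqrt 2)) (ε ^ 2 / α) / (4 * c₂)))))
        (2 * ∫ t in (ε ^ 2 / 2)..c₁, 1 / (2 * ψ (Real.sqrt t))) + 1 ≤ n) :
    ‖x n - q‖ ≤ ε :=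
  stmt_12_general J ω hJ hωpos hω E A ψ q σ a α f r c₁ c₂ x hψmono hψpos hψ0 hσ hxE hiter ha hale hf
    hr hc₁ hc₁b hc₁b' hc₂ hc₂b ε hε n hn
end

section
/- Let X be a real Banach space equipped with a uniformly continuous duality selection map J with modulus of continuity ω. Let E ⊆ X, and let T : E → X satisfy: for all x, y ∈ E, |⟨Tx − Ty, J(x − y)⟩| ≤ ‖x − y‖² − ψ(‖x − y‖), where ψ : [0,∞) → [0,∞) is nondecreasing, positive on (0,∞), with ψ(0) = 0. Let P : X → X be a nonexpansive retraction onto E (P(X) ⊆ E, Px = x for x ∈ E, and ‖Px − Py‖ ≤ ‖x − y‖ for all x, y ∈ X), and let (x_n) be a sequence in E with x_{n+1} = P((1 − α_n)x_n + α_n T x_n), where (α_n) is a sequence in (0, α] with α_n → 0 with rate of convergence f and ∑_{n=0}^∞ α_n = ∞ with rate of divergence r. Let q ∈ E be a fixpoint of T, and suppose c₁, c₂ > 0 satisfy ‖x_n − q‖ ≤ c₁, ‖x_n − q‖² ≤ c₁, and ‖T x_n − x_n‖ ≤ c₂ for all n. Then for every ε > 0 and every n ≥ Φ(ε) := r(N((1/2)·min{2ψ(ε/√2),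 ε²/α}), 2∫_{ε²/2}^{c₁} dt/(2ψ(√t))) + 1, where N(δ) := f((1/c₂)·ω(c₁, δ/(4c₂))), we have ‖x_n − q‖ ≤ ε. -/
/-!
Write `u m = x m - q` and `v m = T (x m) - x m`. Nonexpansiveness of `P` gives
`‖u (m + 1)‖ ≤ ‖u m + a m • v m‖`, and the contractivity condition at the fixpoint gives
`J (u m) (v m) ≤ -ψ ‖u m‖`. From `N` on, `a m * c₂ ≤ ω c₁ η` for a small `η`, so `J` moves by at
most `η` along a step, and `‖p‖² - ‖u‖² ≤ 2 J p (p - u)` yields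
`‖u (m + 1)‖² ≤ ‖u m‖² - a m ψ ‖u m‖` while `‖u m‖² > ε² / 2`, and `‖u (m + 1)‖² ≤ ε²` once `‖u m‖² ≤ ε² / 2`. Comparing the decrease of
`‖u m‖²` with the integral of `1 / ψ (√t)` shows that `‖u m‖²` cannot stay above `ε² / 2` for the
`r N (∫ …)` steps after `N`, and from then on it never exceeds `ε²`.
-/

open Set MeasureTheory

section RealSequences

theorem MonotoneOn.antitoneOn_inv_of_pos {φ : ℝ → ℝ} {s : Set ℝ} (hφ : MonotoneOn φ s)
    (hφpos : ∀ t ∈ s, 0 < φ t) : AntitoneOn (fun t => (φ t)⁻¹) s :=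
  fun x hx _ hy hxy => inv_anti₀ (hφpos x hx) (hφ hx hy hxy)

theorem sub_div_le_integral_inv_sub {φ : ℝ → ℝ} {L C s t : ℝ}
    (hφ : MonotoneOn φ (Icc L C)) (hφpos : ∀ u ∈ Icc L C, 0 < φ u)
    (hs : L ≤ s) (hst : s ≤ t) (htC : t ≤ C) :
    (t - s) / φ t ≤ (∫ u in L..t, (φ u)⁻¹) - ∫ u in L..s, (φ u)⁻¹ := by
  have hanti := hφ.antitoneOn_inv_of_pos hφpos
  have hint : ∀ x y, L ≤ x → x ≤ y → y ≤ C →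
      IntervalIntegrable (fun u => (φ u)⁻¹) volume x y := fun x y hx hxy hy =>
    AntitoneOn.intervalIntegrable <| by
      rw [uIcc_of_le hxy]; exact hanti.mono (Icc_subset_Icc hx hy)
  rw [intervalIntegral.integral_interval_sub_left (hint L t le_rfl (hs.trans hst) htC)
    (hint L s le_rfl hs (hst.trans htC))]
  calc (t - s) / φ t = ∫ _ in s..t, (φ t)⁻¹ := by simp [div_eq_mul_inv]
    _ ≤ ∫ u in s..t, (φ u)⁻¹ :=
      intervalIntegral.integral_mono_on hst intervalIntegrable_const (hint s t hs hst htC)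
        (fun u hu => hanti ⟨hs.trans hu.1, hu.2.trans htC⟩ ⟨hs.trans hst, htC⟩ hu.2)

theorem exists_le_of_integral_inv_lt_sum {a b : ℕ → ℝ} {φ : ℝ → ℝ} {L C : ℝ} {N M : ℕ}
    (hφ : MonotoneOn φ (Icc L C)) (hφpos : ∀ t ∈ Icc L C, 0 < φ t)
    (ha : ∀ m, 0 ≤ a m) (hbC : ∀ m, b m ≤ C)
    (hdec : ∀ m, N ≤ m → L < b m → b (m + 1) ≤ b m - a m * φ (b m)) (hNM : N ≤ M)
    (hsum : ∫ t in L..C, (φ t)⁻¹ < ∑ m ∈ Finset.Icc N M, a m) :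
    ∃ m, N ≤ m ∧ m ≤ M + 1 ∧ b m ≤ L := by
  by_contra! hL
  set G : ℝ → ℝ := fun t => ∫ u in L..t, (φ u)⁻¹
  have hG : ∀ s t, L ≤ s → s ≤ t → t ≤ C → (t - s) / φ t ≤ G t - G s :=
    fun _ _ => sub_div_le_integral_inv_sub hφ hφpos
  have hGmono : ∀ s t, L ≤ s → s ≤ t → t ≤ C → G s ≤ G t := fun s t hs hst htC => by
    have := div_nonneg (sub_nonneg.mpr hst) (hφpos t ⟨hs.trans hst, htC⟩).le
    linarith [hG s t hs hst htC]
  have hterm : ∀ m ∈ Finset.Ico N (M + 1), a m ≤ G (b m) - G (b (m + 1)) := by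
    intro m hm
    obtain ⟨hNm, hmM⟩ := Finset.mem_Ico.mp hm
    have hbm := hL m hNm (by omega)
    have hφm : 0 < φ (b m) := hφpos _ ⟨hbm.le, hbC m⟩
    have hd := hdec m hNm hbm
    calc a m = a m * φ (b m) / φ (b m) := by field_simp
      _ ≤ (b m - b (m + 1)) / φ (b m) := by gcongr; linarith
      _ ≤ G (b m) - G (b (m + 1)) :=
        hG _ _ (hL (m + 1) (by omega) (by omega)).le
          (by nlinarith [mul_nonneg (ha m) hφm.le]) (hbC m)
  have htel : ∑ m ∈ Finset.Ico N (M + 1), (G (b m) - G (b (m + 1)))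
      = G (b N) - G (b (M + 1)) := by
    rw [← neg_sub, ← Finset.sum_Ico_sub (fun m => G (b m)) (by omega),
      ← Finset.sum_neg_distrib]
    simp
  have hup : G (b N) ≤ G C := hGmono _ _ (hL N le_rfl (by omega)).le (hbC N) le_rfl
  have hlow : G L ≤ G (b (M + 1)) := hGmono _ _ le_rfl (hL (M + 1) (by omega) le_rfl).le (hbC _)
  have := Finset.sum_le_sum hterm
  rw [htel, Finset.Ico_add_one_right_eq_Icc] at this
  simp only [G, intervalIntegral.integral_same] at hup hlow
  linarith

theorem le_of_le_at_of_step {b : ℕ → ℝ} {L K : ℝ} {m₀ : ℕ} (hLK : L ≤ K) (hm₀ : b m₀ ≤ L)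
    (hdec : ∀ m, m₀ ≤ m → L < b m → b (m + 1) ≤ b m)
    (hsmall : ∀ m, m₀ ≤ m → b m ≤ L → b (m + 1) ≤ K) {n : ℕ} (hn : m₀ ≤ n) : b n ≤ K := by
  induction n, hn using Nat.le_induction with
  | base => exact hm₀.trans hLK
  | succ m hm ih =>
    rcases le_or_gt (b m) L with hbm | hbm
    · exact hsmall m hm hbm
    · exact (hdec m hm hbm).trans ih

theorem le_of_integral_inv_lt_sum {a b : ℕ → ℝ} {φ : ℝ → ℝ} {L K C : ℝ} {N M : ℕ}
    (hφ : MonotoneOn φ (Icc L C)) (hφpos : ∀ t ∈ Icc L C, 0 < φ t)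
    (ha : ∀ m, 0 ≤ a m) (hbC : ∀ m, b m ≤ C) (hLK : L ≤ K)
    (hdec : ∀ m, N ≤ m → L < b m → b (m + 1) ≤ b m - a m * φ (b m))
    (hsmall : ∀ m, N ≤ m → b m ≤ L → b (m + 1) ≤ K) (hNM : N ≤ M)
    (hsum : ∫ t in L..C, (φ t)⁻¹ < ∑ m ∈ Finset.Icc N M, a m) {n : ℕ} (hn : M + 1 ≤ n) :
    b n ≤ K := by
  obtain ⟨m₀, hNm₀, hm₀M, hm₀⟩ :=
    exists_le_of_integral_inv_lt_sum hφ hφpos ha hbC hdec hNM hsum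
  refine le_of_le_at_of_step hLK hm₀ (fun m hm hbm => ?_)
    (fun m hm => hsmall m (hNm₀.trans hm)) (hm₀M.trans hn)
  have := mul_nonneg (ha m) (hφpos _ ⟨hbm.le, hbC m⟩).le
  linarith [hdec m (hNm₀.trans hm) hbm]

end RealSequences

section DualitySelection

variable {X : Type*} [NormedAddCommGroup X] [NormedSpace ℝ X]

theorem norm_sub_le_two_mul_of_modulus {Y : Type*} [SeminormedAddCommGroup Y] {g : X → Y}
    {R ρ η : ℝ} (hg : ∀ x y : X, ‖x‖ ≤ R → ‖y‖ ≤ R → ‖x - y‖ ≤ ρ → ‖g x - g y‖ ≤ η)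
    {x y : X} (hx : ‖x‖ ≤ R) (hy : ‖y‖ ≤ R) (hxy : ‖x - y‖ ≤ 2 * ρ) :
    ‖g x - g y‖ ≤ 2 * η := by
  set m := midpoint ℝ x y with hm_def
  have hm : ‖m‖ ≤ R := by
    rw [hm_def, midpoint_eq_smul_add, norm_smul, invOf_eq_inv, norm_inv, Real.norm_two]
    linarith [norm_add_le x y]
  have hxm : ‖x - m‖ ≤ ρ := by
    rw [← dist_eq_norm, dist_left_midpoint, Real.norm_two, dist_eq_norm]; linarith
  have hmy : ‖m - y‖ ≤ ρ := by
    rw [← dist_eq_norm, dist_midpoint_right, Real.norm_two, dist_eq_norm]; linarith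
  calc ‖g x - g y‖ ≤ ‖g x - g m‖ + ‖g m - g y‖ := norm_sub_le_norm_sub_add_norm_sub _ _ _
    _ ≤ 2 * η := by linarith [hg _ _ hx hm hxm, hg _ _ hm hy hmy]

theorem StrongDual.apply_le_apply_add {Λ Λ' : StrongDual ℝ X} {v : X} {η c : ℝ}
    (hΛ : ‖Λ - Λ'‖ ≤ η) (hv : ‖v‖ ≤ c) : Λ v ≤ Λ' v + η * c := by
  have h := (le_abs_self ((Λ - Λ') v)).trans ((Λ - Λ').le_opNorm v)
  have : ‖Λ - Λ'‖ * ‖v‖ ≤ η * c := mul_le_mul hΛ hv (norm_nonneg _) ((norm_nonneg _).trans hΛ)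
  linarith [show (Λ - Λ') v = Λ v - Λ' v from rfl]

def IsDualitySelection (J : X → StrongDual ℝ X) : Prop :=
  ∀ x : X, J x x = ‖x‖ ^ 2 ∧ ‖J x‖ = ‖x‖

namespace IsDualitySelection

variable {J : X → StrongDual ℝ X} {R ρ η c a : ℝ} {u v : X}

theorem apply_le (hJ : IsDualitySelection J) (p r : X) : J p r ≤ ‖p‖ * ‖r‖ :=
  (le_abs_self _).trans <| by simpa only [Real.norm_eq_abs, (hJ p).2] using (J p).le_opNorm r

theorem sq_norm_sub_sq_norm_le (hJ : IsDualitySelection J) (p r : X) :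
    ‖p‖ ^ 2 - ‖r‖ ^ 2 ≤ 2 * J p (p - r) := by
  rw [map_sub, (hJ p).1]
  nlinarith [hJ.apply_le p r, sq_nonneg (‖p‖ - ‖r‖)]

theorem norm_mul_sub_le (hJ : IsDualitySelection J) (w r : X) {t : ℝ} (ht : 0 ≤ t) :
    ‖w‖ * (‖t • w‖ - ‖r‖) ≤ J w (t • w - r) := by
  rw [map_sub, map_smul, smul_eq_mul, (hJ w).1, norm_smul, Real.norm_of_nonneg ht]
  nlinarith [hJ.apply_le w r]

theorem apply_map_sub_self_le_neg (hJ : IsDualitySelection J) {T : X → X} {q y : X} {s : ℝ}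
    (hq : T q = q) (h : |J (y - q) (T y - T q)| ≤ ‖y - q‖ ^ 2 - s) :
    J (y - q) (T y - y) ≤ -s := by
  rw [hq] at h
  rw [show T y - y = (T y - q) - (y - q) by abel, map_sub, (hJ _).1]
  linarith [le_abs_self (J (y - q) (T y - q))]

/-- If `p = u + a • v` left the ball, its radial projection `w` onto the sphere would lie within
`2ρ` of `u`, so `J w v ≤ J u v + 2ηc`, and `R (‖p‖ - ‖u‖) ≤ J w (p - u) = a J w v` would
contradict `hin`. -/
theorem norm_add_smul_le (hJ : IsDualitySelection J)
    (hmod : ∀ x y : X, ‖x‖ ≤ R → ‖y‖ ≤ R → ‖x - y‖ ≤ ρ → ‖J x - J y‖ ≤ η)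
    (hR : 0 < R) (hu : ‖u‖ ≤ R) (hv : ‖v‖ ≤ c) (ha : 0 ≤ a) (hac : a * c ≤ ρ)
    (hin : R * ‖u‖ + a * (J u v + 2 * η * c) ≤ R ^ 2) : ‖u + a • v‖ ≤ R := by
  set p := u + a • v
  by_contra! hRp
  have hp : 0 < ‖p‖ := hR.trans hRp
  have hpu : p - u = a • v := add_sub_cancel_left u (a • v)
  have hav : ‖a • v‖ ≤ a * c := by
    rw [norm_smul, Real.norm_of_nonneg ha]; exact mul_le_mul_of_nonneg_left hv ha
  set w := (R / ‖p‖) • p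
  have hw : ‖w‖ = R := by
    rw [norm_smul, Real.norm_of_nonneg (by positivity), div_mul_cancel₀ _ hp.ne']
  have hwp : ‖w - p‖ = ‖p‖ - R := by
    rw [show w - p = -((1 - R / ‖p‖) • p) by simp only [w, sub_smul, one_smul]; abel, norm_neg,
      norm_smul, Real.norm_of_nonneg (by rw [sub_nonneg, div_le_one hp]; exact hRp.le)]
    field_simp
  have hwu : ‖w - u‖ ≤ 2 * ρ :=
    calc ‖w - u‖ ≤ ‖w - p‖ + ‖p - u‖ := norm_sub_le_norm_sub_add_norm_sub w p u
      _ ≤ 2 * ρ := by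
        rw [hwp, hpu]; linarith [(norm_add_le u (a • v) : ‖p‖ ≤ ‖u‖ + ‖a • v‖)]
  have hJw : J w v ≤ J u v + 2 * η * c :=
    StrongDual.apply_le_apply_add (norm_sub_le_two_mul_of_modulus hmod hw.le hu hwu) hv
  have hpw : (‖p‖ / R) • w = p := by
    rw [smul_smul, div_mul_div_cancel₀ hR.ne', div_self hp.ne', one_smul]
  have key := hJ.norm_mul_sub_le w u (t := ‖p‖ / R) (by positivity)
  rw [hpw, hw, hpu, map_smul, smul_eq_mul] at key
  nlinarith [mul_le_mul_of_nonneg_left hJw ha]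

theorem sq_norm_add_smul_le (hJ : IsDualitySelection J)
    (hmod : ∀ x y : X, ‖x‖ ≤ R → ‖y‖ ≤ R → ‖x - y‖ ≤ ρ → ‖J x - J y‖ ≤ η)
    (hR : 0 < R) (hu : ‖u‖ ≤ R) (hv : ‖v‖ ≤ c) (ha : 0 ≤ a) (hac : a * c ≤ ρ)
    (hin : R * ‖u‖ + a * (J u v + 2 * η * c) ≤ R ^ 2) :
    ‖u + a • v‖ ^ 2 ≤ ‖u‖ ^ 2 + 2 * a * (J u v + η * c) := by
  have hpu : ‖u + a • v - u‖ ≤ ρ := by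
    rw [add_sub_cancel_left, norm_smul, Real.norm_of_nonneg ha]
    exact (mul_le_mul_of_nonneg_left hv ha).trans hac
  have hJp : J (u + a • v) v ≤ J u v + η * c := StrongDual.apply_le_apply_add
    (hmod _ _ (hJ.norm_add_smul_le hmod hR hu hv ha hac hin) hu hpu) hv
  have key := hJ.sq_norm_sub_sq_norm_le (u + a • v) u
  rw [add_sub_cancel_left, map_smul, smul_eq_mul] at key
  nlinarith [mul_le_mul_of_nonneg_left hJp ha]

theorem sq_norm_add_smul_le_sub (hJ : IsDualitySelection J)
    (hmod : ∀ x y : X, ‖x‖ ≤ R → ‖y‖ ≤ R → ‖x - y‖ ≤ ρ → ‖J x - J y‖ ≤ η)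
    (hR : 0 < R) (hu : ‖u‖ ≤ R) (hv : ‖v‖ ≤ c) (ha : 0 ≤ a) (hac : a * c ≤ ρ) {ψ₀ : ℝ}
    (huv : J u v ≤ -ψ₀) (hψ₀ : 2 * η * c ≤ ψ₀) :
    ‖u + a • v‖ ^ 2 ≤ ‖u‖ ^ 2 - a * ψ₀ := by
  have hneg : a * (J u v + 2 * η * c) ≤ 0 := mul_nonpos_of_nonneg_of_nonpos ha (by linarith)
  have := hJ.sq_norm_add_smul_le hmod hR hu hv ha hac (by nlinarith)
  nlinarith

theorem sq_norm_add_smul_le_sq (hJ : IsDualitySelection J)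
    (hmod : ∀ x y : X, ‖x‖ ≤ R → ‖y‖ ≤ R → ‖x - y‖ ≤ ρ → ‖J x - J y‖ ≤ η)
    (hR : 0 < R) (hu : ‖u‖ ≤ R) (hv : ‖v‖ ≤ c) (ha : 0 ≤ a) (hac : a * c ≤ ρ) {ε : ℝ}
    (huv : J u v ≤ 0) (hε : 0 ≤ ε) (hεR : ε ≤ R) (hu' : ‖u‖ ^ 2 ≤ ε ^ 2 / 2)
    (haηc : 8 * a * η * c ≤ ε ^ 2) : ‖u + a • v‖ ^ 2 ≤ ε ^ 2 := by
  have hu'' : ‖u‖ ≤ 3 / 4 * ε := by nlinarith [norm_nonneg u]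
  have := hJ.sq_norm_add_smul_le hmod hR hu hv ha hac (by nlinarith)
  nlinarith

theorem norm_le_of_divergenceRate_le (hJ : IsDualitySelection J)
    (hmod : ∀ x y : X, ‖x‖ ≤ R → ‖y‖ ≤ R → ‖x - y‖ ≤ ρ → ‖J x - J y‖ ≤ η) (hR : 0 < R)
    {ψ : ℝ → ℝ} (hψ : MonotoneOn ψ (Ici 0)) (hψpos : ∀ t, 0 < t → 0 < ψ t) (hψ0 : ψ 0 = 0)
    {u v : ℕ → X} {a : ℕ → ℝ} {r : ℕ → ℝ → ℕ} {C ε : ℝ} {N n : ℕ}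
    (hnext : ∀ m, ‖u (m + 1)‖ ≤ ‖u m + a m • v m‖) (hpair : ∀ m, J (u m) (v m) ≤ -ψ ‖u m‖)
    (hu : ∀ m, ‖u m‖ ≤ R) (huC : ∀ m, ‖u m‖ ^ 2 ≤ C) (hv : ∀ m, ‖v m‖ ≤ c)
    (ha : ∀ m, 0 ≤ a m) (haρ : ∀ m, N ≤ m → a m * c ≤ ρ)
    (hr : ∀ (M : ℕ) (y : ℝ), 0 < y → M ≤ r M y ∧ y < ∑ m ∈ Finset.Icc M (r M y), a m)
    (hε : 0 < ε) (hηψ : 2 * η * c ≤ ψ (ε / √2)) (haη : ∀ m, 8 * a m * η * c ≤ ε ^ 2)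
    (hn : r N (∫ t in (ε ^ 2 / 2)..C, (ψ √t)⁻¹) + 1 ≤ n) : ‖u n‖ ≤ ε := by
  rcases le_or_gt R ε with hRε | hεR
  · exact (hu n).trans hRε
  rcases le_or_gt C (ε ^ 2 / 2) with hCε | hεC
  · nlinarith [huC n, norm_nonneg (u n)]
  have hφ : MonotoneOn (fun t => ψ √t) (Icc (ε ^ 2 / 2) C) := fun s _ t _ hst =>
    hψ (Real.sqrt_nonneg s) (Real.sqrt_nonneg t) (Real.sqrt_le_sqrt hst)
  have hφpos : ∀ t ∈ Icc (ε ^ 2 / 2) C, 0 < ψ √t := fun t ht =>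
    hψpos _ (Real.sqrt_pos.mpr ((by positivity : (0 : ℝ) < ε ^ 2 / 2).trans_le ht.1))
  have hy : 0 < ∫ t in (ε ^ 2 / 2)..C, (ψ √t)⁻¹ := by
    have := sub_div_le_integral_inv_sub hφ hφpos le_rfl hεC.le le_rfl
    rw [intervalIntegral.integral_same, sub_zero] at this
    exact (div_pos (sub_pos.mpr hεC) (hφpos C ⟨hεC.le, le_rfl⟩)).trans_le this
  obtain ⟨hNM, hsum⟩ := hr N _ hy
  have hstep : ∀ m, ‖u (m + 1)‖ ^ 2 ≤ ‖u m + a m • v m‖ ^ 2 := fun m =>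
    pow_le_pow_left₀ (norm_nonneg _) (hnext m) 2
  have hdec : ∀ m, N ≤ m → ε ^ 2 / 2 < ‖u m‖ ^ 2 →
      ‖u (m + 1)‖ ^ 2 ≤ ‖u m‖ ^ 2 - a m * ψ √(‖u m‖ ^ 2) := by
    intro m hm hum
    have hεu : ε / √2 ≤ ‖u m‖ := by
      refine (pow_le_pow_iff_left₀ (by positivity) (norm_nonneg _) two_ne_zero).mp ?_
      rw [div_pow, Real.sq_sqrt zero_le_two]
      exact hum.le
    rw [Real.sqrt_sq (norm_nonneg _)]
    exact (hstep m).trans (hJ.sq_norm_add_smul_le_sub hmod hR (hu m) (hv m) (ha m) (haρ m hm)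
      (hpair m) (hηψ.trans (hψ (mem_Ici.mpr (by positivity)) (norm_nonneg _) hεu)))
  have hsmall : ∀ m, N ≤ m → ‖u m‖ ^ 2 ≤ ε ^ 2 / 2 → ‖u (m + 1)‖ ^ 2 ≤ ε ^ 2 := by
    intro m hm hum
    have hψu : 0 ≤ ψ ‖u m‖ := hψ0 ▸ hψ self_mem_Ici (norm_nonneg (u m)) (norm_nonneg _)
    exact (hstep m).trans (hJ.sq_norm_add_smul_le_sq hmod hR (hu m) (hv m) (ha m) (haρ m hm)
      ((hpair m).trans (neg_nonpos.mpr hψu)) hε.le hεR.le hum (haη m))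
  have := le_of_integral_inv_lt_sum (b := fun m => ‖u m‖ ^ 2) hφ hφpos ha huC
    (half_le_self (sq_nonneg ε)) hdec hsmall hNM hsum hn
  exact (pow_le_pow_iff_left₀ (norm_nonneg _) hε.le two_ne_zero).mp this

end IsDualitySelection

end DualitySelection

theorem stmt_13_general {X : Type*} [NormedAddCommGroup X] [NormedSpace ℝ X]
    (J : X → StrongDual ℝ X) (ω : ℝ → ℝ → ℝ)
    (hJ : ∀ x : X, J x x = ‖x‖ ^ 2 ∧ ‖J x‖ = ‖x‖)
    (hωpos : ∀ b ε : ℝ, 0 < b → 0 < ε → 0 < ω b ε)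
    (hω : ∀ b ε : ℝ, 0 < b → 0 < ε → ∀ x y : X, ‖x‖ ≤ b → ‖y‖ ≤ b →
      ‖x - y‖ ≤ ω b ε → ‖J x - J y‖ ≤ ε)
    (E : Set X) (T : X → X) (ψ : ℝ → ℝ) (P : X → X)
    (a : ℕ → ℝ) (α : ℝ) (f : ℝ → ℕ) (r : ℕ → ℝ → ℕ) (q : X) (c₁ c₂ : ℝ) (x : ℕ → X)
    (hψmono : ∀ s t : ℝ, 0 ≤ s → s ≤ t → ψ s ≤ ψ t)
    (hψpos : ∀ t : ℝ, 0 < t → 0 < ψ t) (hψ0 : ψ 0 = 0)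
    (hT : ∀ y ∈ E, ∀ z ∈ E, |J (y - z) (T y - T z)| ≤ ‖y - z‖ ^ 2 - ψ ‖y - z‖)
    (hPid : ∀ y ∈ E, P y = y)
    (hPne : ∀ y z : X, ‖P y - P z‖ ≤ ‖y - z‖)
    (hxE : ∀ n, x n ∈ E)
    (hiter : ∀ n, x (n + 1) = P ((1 - a n) • x n + a n • T (x n)))
    (ha : ∀ n, 0 < a n) (hale : ∀ n, a n ≤ α)
    (hf : ∀ ε : ℝ, 0 < ε → ∀ n, f ε ≤ n → a n ≤ ε)
    (hr : ∀ (M : ℕ) (y : ℝ), 0 < y →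
      M ≤ r M y ∧ y < ∑ n ∈ Finset.Icc M (r M y), a n)
    (hqE : q ∈ E) (hfix : T q = q)
    (hc₁ : 0 < c₁) (hc₁b : ∀ n, ‖x n - q‖ ≤ c₁) (hc₁b' : ∀ n, ‖x n - q‖ ^ 2 ≤ c₁)
    (hc₂ : 0 < c₂) (hc₂b : ∀ n, ‖T (x n) - x n‖ ≤ c₂)
    (ε : ℝ) (hε : 0 < ε) (n : ℕ)
    (hn : r (f ((1 / c₂) * ω c₁ ((1 / 2) * min (2 * ψ (ε / Real.sqrt 2)) (ε ^ 2 / α) / (4 * c₂))))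
        (2 * ∫ t in (ε ^ 2 / 2)..c₁, 1 / (2 * ψ (Real.sqrt t))) + 1 ≤ n) :
    ‖x n - q‖ ≤ ε := by
  set δ := (1 / 2) * min (2 * ψ (ε / Real.sqrt 2)) (ε ^ 2 / α)
  set η := δ / (4 * c₂)
  have hα : 0 < α := (ha 0).trans_le (hale 0)
  have hδ : 0 < δ := by have := hψpos _ (by positivity : 0 < ε / √2); positivity
  have hη : 0 < η := by positivity
  have hηc : 4 * η * c₂ = δ := by simp only [η]; field_simp
  have hδψ : δ ≤ ψ (ε / √2) := by
    simp only [δ]; linarith [min_le_left (2 * ψ (ε / √2)) (ε ^ 2 / α)]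
  have hδα : 2 * α * δ ≤ ε ^ 2 := by
    have := mul_le_mul_of_nonneg_left (min_le_right (2 * ψ (ε / √2)) (ε ^ 2 / α)) hα.le
    rw [mul_div_cancel₀ _ hα.ne'] at this
    simp only [δ]; linarith
  refine IsDualitySelection.norm_le_of_divergenceRate_le hJ (hω c₁ η hc₁ hη) hc₁
    (fun s hs t _ hst => hψmono s t hs hst) hψpos hψ0 (u := fun m => x m - q)
    (v := fun m => T (x m) - x m) (N := f (1 / c₂ * ω c₁ η)) (fun m => ?_)
    (fun m => ?_) hc₁b hc₁b' hc₂b (fun m => (ha m).le) (fun m hm => ?_) hr hε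
    (by linarith) (fun m => ?_) ?_
  · have := hPne ((1 - a m) • x m + a m • T (x m)) q
    rw [hPid q hqE] at this
    rw [hiter]; convert this using 2; module
  · exact IsDualitySelection.apply_map_sub_self_le_neg hJ hfix (hT _ (hxE m) q hqE)
  · have hω' : 0 < 1 / c₂ * ω c₁ η := by have := hωpos c₁ η hc₁ hη; positivity
    calc a m * c₂ ≤ 1 / c₂ * ω c₁ η * c₂ := by gcongr; exact hf _ hω' m hm
      _ = ω c₁ η := by field_simp
  · calc 8 * a m * η * c₂ = 2 * a m * δ := by rw [← hηc]; ring
      _ ≤ 2 * α * δ := by gcongr; exact hale m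
      _ ≤ ε ^ 2 := hδα
  · convert hn using 3
    rw [← intervalIntegral.integral_const_mul]
    congr 1 with t
    rw [one_div, mul_inv, ← mul_assoc, mul_inv_cancel₀ two_ne_zero, one_mul]

/-- Convergence with rate of the retracted Mann iteration for a d-weakly
contractive mapping T in a Banach space with a uniformly continuous duality selection
map J with modulus ω (quantitative version of Chidume–Zegeye–Aneke). -/
theorem stmt_13 {X : Type*} [NormedAddCommGroup X] [NormedSpace ℝ X] [CompleteSpace X]
    (J : X → StrongDual ℝ X) (ω : ℝ → ℝ → ℝ)
    (hJ : ∀ x : X, J x x = ‖x‖ ^ 2 ∧ ‖J x‖ = ‖x‖)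
    (hωpos : ∀ b ε : ℝ, 0 < b → 0 < ε → 0 < ω b ε)
    (hω : ∀ b ε : ℝ, 0 < b → 0 < ε → ∀ x y : X, ‖x‖ ≤ b → ‖y‖ ≤ b →
      ‖x - y‖ ≤ ω b ε → ‖J x - J y‖ ≤ ε)
    (E : Set X) (T : X → X) (ψ : ℝ → ℝ) (P : X → X)
    (a : ℕ → ℝ) (α : ℝ) (f : ℝ → ℕ) (r : ℕ → ℝ → ℕ) (q : X) (c₁ c₂ : ℝ) (x : ℕ → X)
    (hψmono : ∀ s t : ℝ, 0 ≤ s → s ≤ t → ψ s ≤ ψ t)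
    (hψpos : ∀ t : ℝ, 0 < t → 0 < ψ t) (hψ0 : ψ 0 = 0)
    (hT : ∀ y ∈ E, ∀ z ∈ E, |J (y - z) (T y - T z)| ≤ ‖y - z‖ ^ 2 - ψ ‖y - z‖)
    (hPrange : ∀ y : X, P y ∈ E) (hPid : ∀ y ∈ E, P y = y)
    (hPne : ∀ y z : X, ‖P y - P z‖ ≤ ‖y - z‖)
    (hxE : ∀ n, x n ∈ E)
    (hiter : ∀ n, x (n + 1) = P ((1 - a n) • x n + a n • T (x n)))
    (ha : ∀ n, 0 < a n) (hale : ∀ n, a n ≤ α)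
    (hf : ∀ ε : ℝ, 0 < ε → ∀ n, f ε ≤ n → a n ≤ ε)
    (hr : ∀ (M : ℕ) (y : ℝ), 0 < y →
      M ≤ r M y ∧ y < ∑ n ∈ Finset.Icc M (r M y), a n)
    (hqE : q ∈ E) (hfix : T q = q)
    (hc₁ : 0 < c₁) (hc₁b : ∀ n, ‖x n - q‖ ≤ c₁) (hc₁b' : ∀ n, ‖x n - q‖ ^ 2 ≤ c₁)
    (hc₂ : 0 < c₂) (hc₂b : ∀ n, ‖T (x n) - x n‖ ≤ c₂)
    (ε : ℝ) (hε : 0 < ε) (n : ℕ)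
    (hn : r (f ((1 / c₂) * ω c₁ ((1 / 2) * min (2 * ψ (ε / Real.sqrt 2)) (ε ^ 2 / α) / (4 * c₂))))
        (2 * ∫ t in (ε ^ 2 / 2)..c₁, 1 / (2 * ψ (Real.sqrt t))) + 1 ≤ n) :
    ‖x n - q‖ ≤ ε :=
  stmt_13_general J ω hJ hωpos hω E T ψ P a α f r q c₁ c₂ x hψmono hψpos hψ0 hT hPid hPne hxE hiter
    ha hale hf hr hqE hfix hc₁ hc₁b hc₁b' hc₂ hc₂b ε hε n hn
end

section
/- Let X be a real Banach space equipped with a uniformly continuous duality selection map J with modulus of continuity ω. Let E₁, E₂ ⊆ X, and let Q₁, Q₂ : X → X be sunny nonexpansive retractions onto E₁ and E₂ respectively, with ‖Q₁0‖ ≤ d and ‖Q₂0‖ ≤ d. Fix ε, b > 0 and set R := 2(2b + d) + 1 and a := min{1, ω(R, ε/R)}. If H*[E₁, E₂, a] holds, then for every x ∈ X with ‖x‖ ≤ b we have ‖Q₁x − Q₂x‖² ≤ ε. -/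
/-!
Write `p = Q₁ x`, `q = Q₂ x`. A selection that is uniformly continuous on bounded sets is
continuous, so `J (-w) = -J w` (a continuous selection is the only normalized duality map:
monotonicity of the duality pairing gives `j u ≤ J (w + t • u) u` for `t > 0`, and `t → 0⁺`).
Hence `‖p - q‖² = J (p - q) (x - q) + J (q - p) (x - p)`. Sunniness of `Q₂` bounds the first term
by `0` after replacing `p` by a point of `E₂` at distance `≤ ω(R, ε/R)`, which moves `J (· - q)`
by at most `ε / R`; symmetrically for the second term. Both terms are thus `≤ ε/R · (2b + d)`.
-/

open Filter Topology

section Modulus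

variable {X F : Type*} [SeminormedAddCommGroup X] [SeminormedAddCommGroup F]

theorem continuous_of_boundedModulus {f : X → F} {ω : ℝ → ℝ → ℝ}
    (hωpos : ∀ b ε : ℝ, 0 < b → 0 < ε → 0 < ω b ε)
    (hω : ∀ b ε : ℝ, 0 < b → 0 < ε → ∀ x y : X, ‖x‖ ≤ b → ‖y‖ ≤ b →
      ‖x - y‖ ≤ ω b ε → ‖f x - f y‖ ≤ ε) :
    Continuous f := by
  rw [Metric.continuous_iff]
  intro w ε hε
  have hb : (0 : ℝ) < ‖w‖ + 1 := by positivity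
  refine ⟨min 1 (ω (‖w‖ + 1) (ε / 2)), lt_min one_pos (hωpos _ _ hb (half_pos hε)), ?_⟩
  intro v hv
  rw [dist_eq_norm] at hv ⊢
  have hvw : ‖v‖ ≤ ‖w‖ + 1 := by
    linarith [norm_le_insert' v w, min_le_left 1 (ω (‖w‖ + 1) (ε / 2))]
  have := hω _ _ hb (half_pos hε) v w hvw (by linarith) (hv.le.trans (min_le_right _ _))
  linarith

theorem norm_apply_le_of_nonexpansive {Q : X → X} (hQ : ∀ x y : X, ‖Q x - Q y‖ ≤ ‖x - y‖)
    (x : X) : ‖Q x‖ ≤ ‖x‖ + ‖Q 0‖ := by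
  have := hQ x 0
  rw [sub_zero] at this
  linarith [norm_le_insert' (Q x) (Q 0)]

end Modulus

section Duality

variable {X : Type*} [SeminormedAddCommGroup X] [NormedSpace ℝ X]

/-- `j` belongs to the normalized duality map at `w`. -/
def IsNormalizedDual (w : X) (j : StrongDual ℝ X) : Prop :=
  j w = ‖w‖ ^ 2 ∧ ‖j‖ = ‖w‖

namespace IsNormalizedDual

variable {w v : X} {j k : StrongDual ℝ X}

theorem neg (hj : IsNormalizedDual w j) : IsNormalizedDual (-w) (-j) :=
  ⟨by simpa using hj.1, by simpa using hj.2⟩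

theorem apply_le (hj : IsNormalizedDual w j) (v : X) : j v ≤ ‖w‖ * ‖v‖ := by
  simpa [hj.2] using (le_abs_self _).trans (j.le_opNorm v)

theorem sub_apply_sub_nonneg (hj : IsNormalizedDual w j) (hk : IsNormalizedDual v k) :
    0 ≤ (j - k) (w - v) := by
  have hexp : (j - k) (w - v) = ‖w‖ ^ 2 + ‖v‖ ^ 2 - j v - k w := by
    simp only [sub_apply, map_sub, hj.1, hk.1]
    ring
  rw [hexp]
  nlinarith [hj.apply_le v, hk.apply_le w, sq_nonneg (‖w‖ - ‖v‖)]

theorem eq_of_continuousAt {J : X → StrongDual ℝ X} (hJ : ∀ x, IsNormalizedDual x (J x))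
    (hcont : ContinuousAt J w) (hj : IsNormalizedDual w j) : j = J w := by
  have hle : ∀ u, j u ≤ J w u := by
    intro u
    have hline : Tendsto (fun t : ℝ => w + t • u) (𝓝[>] 0) (𝓝 w) := by
      have : Continuous fun t : ℝ => w + t • u := by fun_prop
      simpa using (this.tendsto 0).mono_left nhdsWithin_le_nhds
    refine ge_of_tendsto ((continuous_eval_const u).continuousAt.tendsto.comp
      (hcont.tendsto.comp hline)) ?_
    filter_upwards [self_mem_nhdsWithin] with t (ht : 0 < t)
    have hmono := hj.sub_apply_sub_nonneg (hJ (w + t • u))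
    rw [sub_add_cancel_left, map_neg, map_smul, smul_eq_mul] at hmono
    simp only [sub_apply, Function.comp_apply] at hmono ⊢
    nlinarith
  ext u
  have := hle (-u)
  simp only [map_neg] at this
  exact le_antisymm (hle u) (by linarith)

end IsNormalizedDual

variable {J : X → StrongDual ℝ X}

theorem map_neg_of_continuous (hJ : ∀ x, IsNormalizedDual x (J x)) (hcont : Continuous J)
    (w : X) : J (-w) = -J w :=
  ((hJ w).neg.eq_of_continuousAt hJ hcont.continuousAt).symm

theorem sq_norm_sub_eq_apply_add_apply (hJ : ∀ x, IsNormalizedDual x (J x))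
    (hcont : Continuous J) (x p q : X) :
    ‖p - q‖ ^ 2 = J (p - q) (x - q) + J (q - p) (x - p) := by
  rw [← neg_sub p q, map_neg_of_continuous hJ hcont, ← (hJ (p - q)).1,
    neg_apply, ← sub_eq_add_neg, ← map_sub, sub_sub_sub_cancel_left]

theorem apply_le_of_apply_nonpos {f g : StrongDual ℝ X} {v : X} (hg : g v ≤ 0) :
    f v ≤ ‖f - g‖ * ‖v‖ := by
  have := (le_abs_self _).trans ((f - g).le_opNorm v)
  rw [sub_apply] at this
  linarith

theorem sunny_apply_le {ω : ℝ → ℝ → ℝ}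
    (hω : ∀ b ε : ℝ, 0 < b → 0 < ε → ∀ x y : X, ‖x‖ ≤ b → ‖y‖ ≤ b →
      ‖x - y‖ ≤ ω b ε → ‖J x - J y‖ ≤ ε)
    {E : Set X} {Q : X → X} (hsunny : ∀ x : X, ∀ y ∈ E, J (y - Q x) (x - Q x) ≤ 0)
    {R η : ℝ} (hR : 0 < R) (hη : 0 < η) {x q e : X} (he : e ∈ E)
    (heq : ‖e - q‖ ≤ min 1 (ω R η)) (hq : ‖q - Q x‖ + 1 ≤ R) :
    J (q - Q x) (x - Q x) ≤ η * ‖x - Q x‖ := by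
  have he' : ‖e - Q x‖ ≤ R := by
    linarith [norm_sub_le_norm_sub_add_norm_sub e q (Q x), min_le_left 1 (ω R η)]
  have hJ : ‖J (q - Q x) - J (e - Q x)‖ ≤ η := by
    refine hω R η hR hη _ _ (by linarith [norm_nonneg (q - Q x)]) he' ?_
    rw [sub_sub_sub_cancel_right, norm_sub_rev]
    exact heq.trans (min_le_right _ _)
  calc J (q - Q x) (x - Q x) ≤ ‖J (q - Q x) - J (e - Q x)‖ * ‖x - Q x‖ :=
        apply_le_of_apply_nonpos (hsunny x e he)
    _ ≤ η * ‖x - Q x‖ := by gcongr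

end Duality

theorem stmt_15_general {X : Type*} [NormedAddCommGroup X] [NormedSpace ℝ X]
    (J : X → StrongDual ℝ X) (ω : ℝ → ℝ → ℝ)
    (hJ : ∀ x : X, J x x = ‖x‖ ^ 2 ∧ ‖J x‖ = ‖x‖)
    (hωpos : ∀ b ε : ℝ, 0 < b → 0 < ε → 0 < ω b ε)
    (hω : ∀ b ε : ℝ, 0 < b → 0 < ε → ∀ x y : X, ‖x‖ ≤ b → ‖y‖ ≤ b →
      ‖x - y‖ ≤ ω b ε → ‖J x - J y‖ ≤ ε)
    (E₁ E₂ : Set X) (Q₁ Q₂ : X → X) (d : ℝ)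
    (hQ₁range : ∀ x : X, Q₁ x ∈ E₁)
    (hQ₁ne : ∀ x y : X, ‖Q₁ x - Q₁ y‖ ≤ ‖x - y‖)
    (hQ₁sunny : ∀ x : X, ∀ y ∈ E₁, J (y - Q₁ x) (x - Q₁ x) ≤ 0)
    (hQ₂range : ∀ x : X, Q₂ x ∈ E₂)
    (hQ₂ne : ∀ x y : X, ‖Q₂ x - Q₂ y‖ ≤ ‖x - y‖)
    (hQ₂sunny : ∀ x : X, ∀ y ∈ E₂, J (y - Q₂ x) (x - Q₂ x) ≤ 0)
    (hd₁ : ‖Q₁ 0‖ ≤ d) (hd₂ : ‖Q₂ 0‖ ≤ d)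
    (ε b : ℝ) (hε : 0 < ε) (hb : 0 < b)
    (hH₁ : ∀ x ∈ E₁, ∃ y ∈ E₂,
      ‖x - y‖ ≤ min 1 (ω (2 * (2 * b + d) + 1) (ε / (2 * (2 * b + d) + 1))))
    (hH₂ : ∀ y ∈ E₂, ∃ x ∈ E₁,
      ‖x - y‖ ≤ min 1 (ω (2 * (2 * b + d) + 1) (ε / (2 * (2 * b + d) + 1))))
    (x : X) (hx : ‖x‖ ≤ b) :
    ‖Q₁ x - Q₂ x‖ ^ 2 ≤ ε := by
  have hd : 0 ≤ d := (norm_nonneg _).trans hd₁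
  set R := 2 * (2 * b + d) + 1
  have hR : 0 < R := by positivity
  have hp := norm_apply_le_of_nonexpansive hQ₁ne x
  have hq := norm_apply_le_of_nonexpansive hQ₂ne x
  have hpq : ‖Q₁ x - Q₂ x‖ + 1 ≤ R := by linarith [norm_sub_le (Q₁ x) (Q₂ x)]
  have hxp : ‖x - Q₁ x‖ + ‖x - Q₂ x‖ ≤ R := by
    linarith [norm_sub_le x (Q₁ x), norm_sub_le x (Q₂ x)]
  obtain ⟨e₁, he₁, hqe₁⟩ := hH₂ (Q₂ x) (hQ₂range x)
  obtain ⟨e₂, he₂, hpe₂⟩ := hH₁ (Q₁ x) (hQ₁range x)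
  have h₁ := sunny_apply_le (η := ε / R) hω hQ₁sunny hR (by positivity) he₁ hqe₁ (by rwa [norm_sub_rev])
  have h₂ := sunny_apply_le (η := ε / R) hω hQ₂sunny hR (by positivity) he₂ (by rwa [norm_sub_rev]) hpq
  calc ‖Q₁ x - Q₂ x‖ ^ 2
      = J (Q₁ x - Q₂ x) (x - Q₂ x) + J (Q₂ x - Q₁ x) (x - Q₁ x) :=
        sq_norm_sub_eq_apply_add_apply hJ (continuous_of_boundedModulus hωpos hω) x _ _
    _ ≤ ε / R * (‖x - Q₁ x‖ + ‖x - Q₂ x‖) := by linarith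
    _ ≤ ε / R * R := by gcongr
    _ = ε := div_mul_cancel₀ _ hR.ne'

/-- Modulus-of-uniqueness lemma for sunny nonexpansive retractions: if
H*[E₁,E₂,a] holds for a := min{1, ω(R, ε/R)} with R := 2(2b + d) + 1, then
‖Q₁x − Q₂x‖² ≤ ε for all x with ‖x‖ ≤ b. -/
theorem stmt_15 {X : Type*} [NormedAddCommGroup X] [NormedSpace ℝ X] [CompleteSpace X]
    (J : X → StrongDual ℝ X) (ω : ℝ → ℝ → ℝ)
    (hJ : ∀ x : X, J x x = ‖x‖ ^ 2 ∧ ‖J x‖ = ‖x‖)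
    (hωpos : ∀ b ε : ℝ, 0 < b → 0 < ε → 0 < ω b ε)
    (hω : ∀ b ε : ℝ, 0 < b → 0 < ε → ∀ x y : X, ‖x‖ ≤ b → ‖y‖ ≤ b →
      ‖x - y‖ ≤ ω b ε → ‖J x - J y‖ ≤ ε)
    (E₁ E₂ : Set X) (Q₁ Q₂ : X → X) (d : ℝ)
    (hQ₁range : ∀ x : X, Q₁ x ∈ E₁) (hQ₁id : ∀ x ∈ E₁, Q₁ x = x)
    (hQ₁ne : ∀ x y : X, ‖Q₁ x - Q₁ y‖ ≤ ‖x - y‖)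
    (hQ₁sunny : ∀ x : X, ∀ y ∈ E₁, J (y - Q₁ x) (x - Q₁ x) ≤ 0)
    (hQ₂range : ∀ x : X, Q₂ x ∈ E₂) (hQ₂id : ∀ x ∈ E₂, Q₂ x = x)
    (hQ₂ne : ∀ x y : X, ‖Q₂ x - Q₂ y‖ ≤ ‖x - y‖)
    (hQ₂sunny : ∀ x : X, ∀ y ∈ E₂, J (y - Q₂ x) (x - Q₂ x) ≤ 0)
    (hd₁ : ‖Q₁ 0‖ ≤ d) (hd₂ : ‖Q₂ 0‖ ≤ d)
    (ε b : ℝ) (hε : 0 < ε) (hb : 0 < b)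
    (hH₁ : ∀ x ∈ E₁, ∃ y ∈ E₂,
      ‖x - y‖ ≤ min 1 (ω (2 * (2 * b + d) + 1) (ε / (2 * (2 * b + d) + 1))))
    (hH₂ : ∀ y ∈ E₂, ∃ x ∈ E₁,
      ‖x - y‖ ≤ min 1 (ω (2 * (2 * b + d) + 1) (ε / (2 * (2 * b + d) + 1))))
    (x : X) (hx : ‖x‖ ≤ b) :
    ‖Q₁ x - Q₂ x‖ ^ 2 ≤ ε :=
  stmt_15_general J ω hJ hωpos hω E₁ E₂ Q₁ Q₂ d hQ₁range hQ₁ne hQ₁sunny hQ₂range hQ₂ne hQ₂sunny hd₁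
    hd₂ ε b hε hb hH₁ hH₂ x hx
end

section
/- Let X be a real normed space, E ⊆ X, and T : E → X a contractive mapping with modulus τ : (0,∞) → (0,∞), i.e. for all x, y ∈ E and all ε > 0: ‖x − y‖ ≥ ε implies ‖Tx − Ty‖ + τ(ε) ≤ ‖x − y‖. Define ψ : [0,∞) → [0,∞) by ψ(0) := 0 and ψ(ε) := inf{τ(μ) : μ ≥ ε} for ε > 0, and suppose ψ(ε) > 0 for all ε > 0. Then ψ is nondecreasing and T is ψ-weakly contractive: ‖Tx − Ty‖ ≤ ‖x − y‖ − ψ(‖x − y‖) for all x, y ∈ E. -/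
open Set

section InfOverIci

variable {α β : Type*} [Preorder α] [ConditionallyCompleteLattice β] {f : α → β} {a b : α}

theorem csInf_image_Ici_mono (hf : BddBelow (f '' Ici a)) (hab : a ≤ b) :
    sInf (f '' Ici a) ≤ sInf (f '' Ici b) :=
  csInf_le_csInf hf (nonempty_Ici.image f) (image_mono (Ici_subset_Ici.2 hab))

theorem csInf_image_Ici_le (hf : BddBelow (f '' Ici a)) : sInf (f '' Ici a) ≤ f a :=
  csInf_le hf (mem_image_of_mem f self_mem_Ici)

end InfOverIci

theorem stmt_18_general {X : Type*} [NormedAddCommGroup X]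
    (E : Set X) (T : X → X) (τ : ℝ → ℝ)
    (hτpos : ∀ ε : ℝ, 0 < ε → 0 < τ ε)
    (hcontr : ∀ x ∈ E, ∀ y ∈ E, ∀ ε : ℝ, 0 < ε → ε ≤ ‖x - y‖ →
      ‖T x - T y‖ + τ ε ≤ ‖x - y‖)
    (ψ : ℝ → ℝ) (hψ0 : ψ 0 = 0)
    (hψdef : ∀ ε : ℝ, 0 < ε → ψ ε = sInf (τ '' Set.Ici ε)) :
    (∀ s t : ℝ, 0 ≤ s → s ≤ t → ψ s ≤ ψ t) ∧
    (∀ x ∈ E, ∀ y ∈ E, ‖T x - T y‖ ≤ ‖x - y‖ - ψ ‖x - y‖) := by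
  have hτ_nonneg : ∀ ε : ℝ, 0 < ε → 0 ∈ lowerBounds (τ '' Ici ε) := by
    rintro ε hε _ ⟨μ, hμ, rfl⟩
    exact (hτpos μ (hε.trans_le hμ)).le
  have hbdd : ∀ ε : ℝ, 0 < ε → BddBelow (τ '' Ici ε) := fun ε hε ↦ ⟨0, hτ_nonneg ε hε⟩
  have hψ_nonneg : ∀ t : ℝ, 0 ≤ t → 0 ≤ ψ t := by
    intro t ht
    rcases ht.eq_or_lt with rfl | ht
    · exact hψ0.ge
    · rw [hψdef t ht]
      exact Real.sInf_nonneg (hτ_nonneg t ht)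
  refine ⟨fun s t hs hst ↦ ?_, fun x hx y hy ↦ ?_⟩
  · rcases hs.eq_or_lt with rfl | hs
    · rw [hψ0]
      exact hψ_nonneg t hst
    · rw [hψdef s hs, hψdef t (hs.trans_le hst)]
      exact csInf_image_Ici_mono (hbdd s hs) hst
  · rcases eq_or_ne x y with rfl | hxy
    · simp [hψ0]
    have hd : 0 < ‖x - y‖ := norm_pos_iff.2 (sub_ne_zero.2 hxy)
    have hψ_le_τ : ψ ‖x - y‖ ≤ τ ‖x - y‖ := hψdef _ hd ▸ csInf_image_Ici_le (hbdd _ hd)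
    linarith [hcontr x hx y hy ‖x - y‖ hd le_rfl]

/-- A contractive mapping with modulus τ is ψ-weakly contractive for
ψ(0) := 0 and ψ(ε) := inf{τ(μ) : μ ≥ ε} (ε > 0), provided this infimum is always
positive; moreover ψ is nondecreasing. -/
theorem stmt_18 {X : Type*} [NormedAddCommGroup X] [NormedSpace ℝ X]
    (E : Set X) (T : X → X) (τ : ℝ → ℝ)
    (hτpos : ∀ ε : ℝ, 0 < ε → 0 < τ ε)
    (hcontr : ∀ x ∈ E, ∀ y ∈ E, ∀ ε : ℝ, 0 < ε → ε ≤ ‖x - y‖ →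
      ‖T x - T y‖ + τ ε ≤ ‖x - y‖)
    (ψ : ℝ → ℝ) (hψ0 : ψ 0 = 0)
    (hψdef : ∀ ε : ℝ, 0 < ε → ψ ε = sInf (τ '' Set.Ici ε))
    (hψpos : ∀ ε : ℝ, 0 < ε → 0 < ψ ε) :
    (∀ s t : ℝ, 0 ≤ s → s ≤ t → ψ s ≤ ψ t) ∧
    (∀ x ∈ E, ∀ y ∈ E, ‖T x - T y‖ ≤ ‖x - y‖ - ψ ‖x - y‖) :=
  stmt_18_general E T τ hτpos hcontr ψ hψ0 hψdef
end
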